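/- arXiv:2305.19433 — 11 statements merged into one kernel-verified Lean document; each statement's English description precedes it below -/
import Mathlib

section
/- For 0 ≤ i ≤ N-1, the vector r_i with components r_i^j = 0 for j < i, r_i^i = 1, and r_i^k = -f_k/(1 - Σ_{j=0}^i f_j) for k = i+1,…,N satisfies A r_i = λ_i r_i, i.e. it is an eigenvector of A for the eigenvalue λ_i = v_i - (1/(1-ρ)) Σ_{j=i+1}^N (v_j - v_i) f_j. -/
/-- For `0 ≤ i ≤ N-1`, the vector `r_i` with components `0` for `j < i`, `1` at `i`,
and `-f_k/(1 - Σ_{j≤i} f_j)` for `k > i` is an eigenvector of `A` for the eigenvalue `λ_i`. -/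
theorem stmt1 (N : ℕ) (hN : 1 ≤ N) (v f : Fin (N+1) → ℝ)
    (hv : StrictMono v) (hv0 : v 0 = 0) (hvN : v (Fin.last N) = 1)
    (hf : ∀ i, 0 ≤ f i) (hρ : ∑ i, f i < 1)
    (lam : Fin (N+1) → ℝ)
    (hlam : ∀ i, lam i = v i - (1/(1 - ∑ j, f j)) * ∑ j ∈ Finset.Ioi i, (v j - v i) * f j)
    (A : Matrix (Fin (N+1)) (Fin (N+1)) ℝ)
    (hA : ∀ i j, A i j = if j = i then lam i
        else if j < i then (1/(1 - ∑ l, f l)) * (v i - v j) * f i else 0)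
    (i : Fin (N+1)) (hi : (i : ℕ) ≤ N - 1)
    (r : Fin (N+1) → ℝ)
    (hr : ∀ j, r j = if j < i then 0 else if j = i then 1
        else -f j / (1 - ∑ l ∈ Finset.Iic i, f l)) :
    A.mulVec r = lam i • r := by
  have hρ' : (1 : ℝ) - ∑ j, f j ≠ 0 := by linarith
  have hSi : ∑ l ∈ Finset.Iic i, f l ≤ ∑ l, f l :=
    Finset.sum_le_sum_of_subset_of_nonneg (Finset.subset_univ _) (fun j _ _ => hf j)
  have hD : (1 : ℝ) - ∑ l ∈ Finset.Iic i, f l ≠ 0 := by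
    have : ∑ l ∈ Finset.Iic i, f l < 1 := lt_of_le_of_lt hSi hρ
    linarith
  funext k
  simp only [Matrix.mulVec, dotProduct, Pi.smul_apply, smul_eq_mul]
  rcases lt_trichotomy k i with hk | hk | hk
  · -- k < i : both sides zero
    rw [hr k, if_pos hk, mul_zero]
    apply Finset.sum_eq_zero
    intro j _
    rcases lt_or_ge j i with h | h
    · rw [hr j, if_pos h, mul_zero]
    · have hjk : k < j := lt_of_lt_of_le hk h
      rw [hA k j, if_neg (ne_of_gt hjk), if_neg (not_lt.2 hjk.le), zero_mul]
  · -- k = i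
    subst hk
    rw [hr k, if_neg (lt_irrefl k), if_pos rfl, mul_one]
    rw [Finset.sum_eq_single k]
    · rw [hA k k, if_pos rfl, hr k, if_neg (lt_irrefl k), if_pos rfl, mul_one]
    · intro j _ hj
      rcases lt_or_gt_of_ne hj with h | h
      · rw [hr j, if_pos h, mul_zero]
      · rw [hA k j, if_neg (ne_of_gt h), if_neg (not_lt.2 h.le), zero_mul]
    · exact fun h => absurd (Finset.mem_univ k) h
  · -- i < k
    have hstep : ∑ j, A k j * r j
        = A k i * r i + (A k k * r k + ∑ j ∈ Finset.Ioo i k, A k j * r j) := by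
      rw [← Finset.sum_subset (Finset.subset_univ (insert i (insert k (Finset.Ioo i k))))
        (by
          intro j _ hj
          simp only [Finset.mem_insert, Finset.mem_Ioo, not_or, not_and_or, not_lt] at hj
          obtain ⟨hji, hjk, hio⟩ := hj
          rcases hio with h | h
          · rw [hr j, if_pos (lt_of_le_of_ne h hji), mul_zero]
          · have hjk' : k < j := lt_of_le_of_ne h (Ne.symm hjk)
            rw [hA k j, if_neg (ne_of_gt hjk'), if_neg (not_lt.2 hjk'.le), zero_mul])]
      rw [Finset.sum_insert (by simp [Finset.mem_insert, Finset.mem_Ioo, ne_of_lt hk, lt_irrefl]),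
        Finset.sum_insert (by simp [Finset.mem_Ioo, lt_irrefl])]
    have hAki : A k i = (1/(1 - ∑ l, f l)) * (v k - v i) * f k := by
      rw [hA k i, if_neg (ne_of_lt hk), if_pos hk]
    have hri : r i = 1 := by rw [hr i, if_neg (lt_irrefl i), if_pos rfl]
    have hAkk : A k k = lam k := by rw [hA k k, if_pos rfl]
    have hrk : r k = -f k / (1 - ∑ l ∈ Finset.Iic i, f l) := by
      rw [hr k, if_neg (not_lt.2 hk.le), if_neg (ne_of_gt hk)]
    have hIoo : ∑ j ∈ Finset.Ioo i k, A k j * r j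
        = ∑ j ∈ Finset.Ioo i k,
            ((1/(1 - ∑ l, f l)) * (v k - v j) * f k * (-f j / (1 - ∑ l ∈ Finset.Iic i, f l))) := by
      refine Finset.sum_congr rfl fun j hj => ?_
      rw [Finset.mem_Ioo] at hj
      rw [hA k j, if_neg (ne_of_lt hj.2), if_pos hj.2,
        hr j, if_neg (not_lt.2 hj.1.le), if_neg (ne_of_gt hj.1)]
    -- decomposition lemmas
    have hU : Finset.Iic i ∪ Finset.Ioi i = (Finset.univ : Finset (Fin (N+1))) := by
      ext j; simp [le_or_gt]
    have hU2 : insert k (Finset.Ioo i k) ∪ Finset.Ioi k = Finset.Ioi i := by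
      ext j
      simp only [Finset.mem_union, Finset.mem_insert, Finset.mem_Ioo, Finset.mem_Ioi]
      constructor
      · rintro ((rfl | ⟨h1, _⟩) | h)
        · exact hk
        · exact h1
        · exact hk.trans h
      · intro h
        rcases lt_trichotomy j k with h2 | h2 | h2
        · exact Or.inl (Or.inr ⟨h, h2⟩)
        · exact Or.inl (Or.inl h2)
        · exact Or.inr h2
    have key : ∀ g : Fin (N+1) → ℝ,
        ∑ j ∈ Finset.Ioi i, g j = g k + ∑ j ∈ Finset.Ioo i k, g j + ∑ j ∈ Finset.Ioi k, g j := by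
      intro g
      rw [← hU2, Finset.sum_union (by
        rw [Finset.disjoint_left]
        intro a ha ha'
        simp only [Finset.mem_insert, Finset.mem_Ioo] at ha
        simp only [Finset.mem_Ioi] at ha'
        rcases ha with rfl | ⟨_, h2⟩
        · exact lt_irrefl a ha'
        · exact absurd ha' (not_lt.2 h2.le)),
        Finset.sum_insert (by simp [Finset.mem_Ioo, lt_irrefl])]
    have hsub : ∀ (s : Finset (Fin (N+1))) (a : Fin (N+1)),
        ∑ j ∈ s, (v j - v a) * f j = (∑ j ∈ s, v j * f j) - v a * ∑ j ∈ s, f j := by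
      intro s a
      rw [Finset.mul_sum, ← Finset.sum_sub_distrib]
      exact Finset.sum_congr rfl fun j _ => by ring
    have htot : ∑ l, f l = (∑ l ∈ Finset.Iic i, f l)
        + (f k + ∑ j ∈ Finset.Ioo i k, f j + ∑ j ∈ Finset.Ioi k, f j) := by
      rw [← hU, Finset.sum_union (by
        rw [Finset.disjoint_left]
        intro a ha ha'
        simp only [Finset.mem_Iic] at ha
        simp only [Finset.mem_Ioi] at ha'
        exact absurd ha' (not_lt.2 ha)), key f]
    have hIoo2 : ∑ j ∈ Finset.Ioo i k,
          ((1/(1 - ∑ l, f l)) * (v k - v j) * f k * (-f j / (1 - ∑ l ∈ Finset.Iic i, f l)))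
        = ((1/(1 - ∑ l, f l)) * f k * (-v k / (1 - ∑ l ∈ Finset.Iic i, f l)))
            * (∑ j ∈ Finset.Ioo i k, f j)
          + ((1/(1 - ∑ l, f l)) * f k * (1 / (1 - ∑ l ∈ Finset.Iic i, f l)))
            * (∑ j ∈ Finset.Ioo i k, v j * f j) := by
      rw [Finset.mul_sum, Finset.mul_sum, ← Finset.sum_add_distrib]
      exact Finset.sum_congr rfl fun j _ => by ring
    rw [hstep, hAki, hri, hAkk, hrk, hIoo, hIoo2, hlam i, hlam k,
      key (fun j => (v j - v i) * f j), hsub, hsub, hsub]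
    rw [htot] at hρ' ⊢
    generalize (∑ j ∈ Finset.Ioo i k, f j) = T1 at *
    generalize (∑ j ∈ Finset.Ioo i k, v j * f j) = T2 at *
    generalize (∑ j ∈ Finset.Ioi k, f j) = R1 at *
    generalize (∑ j ∈ Finset.Ioi k, v j * f j) = R2 at *
    generalize (∑ l ∈ Finset.Iic i, f l) = Si at *
    field_simp
    ring
end

section
/- The vector r_i^k defined recursively by r_i^{i+1} = A_{i+1,i}/(λ_i - λ_{i+1}) and r_i^k = (A_{k,i} + Σ_{j=i+1}^{k-1} A_{k,j} r_i^j)/(λ_i - λ_k) for k = i+2,…,N coincides with the explicit formula r_i^k = -f_k/(1 - Σ_{j=0}^i f_j) for all k = i+1,…,N, provided λ_i ≠ λ_k for all k > i. -/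
/-!
Both the recursion and the claimed formula express `r` as the solution of a lower-triangular
linear system with nonzero diagonal `λ_i - λ_k`, so it suffices to check that the explicit vector
satisfies each equation. After clearing denominators, the `k`-th equation reduces to the identity
`(v_k - v_i) Σ_{i<j≤N} f_j = Σ_{i<j≤k} (v_k - v_j) f_j + Σ_{i<j≤N} (v_j - v_i) f_j
  - Σ_{k<j≤N} (v_j - v_k) f_j`,
which holds termwise on `(i, k]` and on `(k, N]`, together with
`1 - ρ = (1 - Σ_{j≤i} f_j) - Σ_{i<j≤N} f_j`.
-/

open Finset

theorem eq_of_triangular_recursion {K : Type*} [Field K] {i N : ℕ} {a d g r : ℕ → K}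
    {b : ℕ → ℕ → K} (hd : ∀ k, i < k → k ≤ N → d k ≠ 0)
    (hg : ∀ k, i < k → k ≤ N → a k + ∑ j ∈ Ioo i k, b k j * g j = d k * g k)
    (hr : ∀ k, i < k → k ≤ N → r k = (a k + ∑ j ∈ Ioo i k, b k j * r j) / d k) :
    ∀ k, i < k → k ≤ N → r k = g k := by
  intro k
  induction k using Nat.strong_induction_on with
  | _ k ih =>
    intro hik hkN
    have hprev : ∑ j ∈ Ioo i k, b k j * r j = ∑ j ∈ Ioo i k, b k j * g j :=
      sum_congr rfl fun j hj ↦ by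
        rw [ih j (mem_Ioo.1 hj).2 (mem_Ioo.1 hj).1 (by grind)]
    rw [hr k hik hkN, hprev, hg k hik hkN, mul_div_cancel_left₀ _ (hd k hik hkN)]

theorem sub_mul_sum_Ioc_eq {R : Type*} [CommRing R] (v f : ℕ → R) {i k N : ℕ}
    (hik : i ≤ k) (hkN : k ≤ N) :
    (v k - v i) * ∑ j ∈ Ioc i N, f j =
      ∑ j ∈ Ioc i k, (v k - v j) * f j + ∑ j ∈ Ioc i N, (v j - v i) * f j
        - ∑ j ∈ Ioc k N, (v j - v k) * f j := by
  have hlow : ∑ j ∈ Ioc i k, (v k - v i) * f j =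
      ∑ j ∈ Ioc i k, (v k - v j) * f j + ∑ j ∈ Ioc i k, (v j - v i) * f j := by
    rw [← sum_add_distrib]
    exact sum_congr rfl fun _ _ ↦ by ring
  have hhigh : ∑ j ∈ Ioc k N, (v k - v i) * f j =
      ∑ j ∈ Ioc k N, (v j - v i) * f j - ∑ j ∈ Ioc k N, (v j - v k) * f j := by
    rw [← sum_sub_distrib]
    exact sum_congr rfl fun _ _ ↦ by ring
  rw [← sum_Ioc_consecutive _ hik hkN, mul_add, mul_sum, mul_sum, hlow, hhigh,
    ← sum_Ioc_consecutive (fun j ↦ (v j - v i) * f j) hik hkN]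
  ring

theorem sum_range_add_sum_Ioc {M : Type*} [AddCommMonoid M] (f : ℕ → M) {i N : ℕ} (h : i ≤ N) :
    ∑ j ∈ range (i + 1), f j + ∑ j ∈ Ioc i N, f j = ∑ j ∈ range (N + 1), f j := by
  rw [← Ico_add_one_add_one_eq_Ioc]
  exact sum_range_add_sum_Ico f (by omega)

theorem explicit_eigenvector_row_eq {K : Type*} [Field K] (v f : ℕ → K) {c F : K} {i k N : ℕ}
    (hik : i < k) (hkN : k ≤ N) (hc : c * (1 - F - ∑ j ∈ Ioc i N, f j) = 1) (hF : 1 - F ≠ 0) :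
    c * (v k - v i) * f k + ∑ j ∈ Ioo i k, c * (v k - v j) * f k * (-f j / (1 - F)) =
      (v i - c * ∑ j ∈ Ioc i N, (v j - v i) * f j
        - (v k - c * ∑ j ∈ Ioc k N, (v j - v k) * f j)) * (-f k / (1 - F)) := by
  have hsum : ∑ j ∈ Ioo i k, c * (v k - v j) * f k * (-f j / (1 - F)) =
      -(c * f k / (1 - F)) * ∑ j ∈ Ioc i k, (v k - v j) * f j := by
    rw [← Ioo_insert_right hik, sum_insert (by simp), sub_self, zero_mul, zero_add, mul_sum]
    exact sum_congr rfl fun _ _ ↦ by ring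
  rw [hsum]
  field_simp
  linear_combination f k * (v k - v i) * hc + c * f k * sub_mul_sum_Ioc_eq v f hik.le hkN

theorem stmt2_general (N : ℕ) (v f : ℕ → ℝ)
    (hf : ∀ k, 0 < f k) (hρ : ∑ i ∈ Finset.range (N+1), f i < 1)
    (lam : ℕ → ℝ)
    (hlam : ∀ i, lam i = v i - (1/(1 - ∑ j ∈ Finset.range (N+1), f j)) *
      ∑ j ∈ Finset.Ioc i N, (v j - v i) * f j)
    (A : ℕ → ℕ → ℝ)
    (hAl : ∀ k j, j < k → A k j = (1/(1 - ∑ l ∈ Finset.range (N+1), f l)) * (v k - v j) * f k)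
    (i : ℕ)
    (hne : ∀ k, i < k → k ≤ N → lam i ≠ lam k)
    (r : ℕ → ℝ)
    (hr1 : r (i+1) = A (i+1) i / (lam i - lam (i+1)))
    (hrk : ∀ k, i + 2 ≤ k → k ≤ N →
      r k = (A k i + ∑ j ∈ Finset.Ioo i k, A k j * r j) / (lam i - lam k)) :
    ∀ k, i + 1 ≤ k → k ≤ N → r k = -f k / (1 - ∑ j ∈ Finset.range (i+1), f j) := by
  intro k hik hkN
  have hsplit := sum_range_add_sum_Ioc f (show i ≤ N by omega)
  have htail : 0 ≤ ∑ j ∈ Ioc i N, f j := sum_nonneg fun j _ ↦ (hf j).le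
  have hρ0 : 1 - ∑ j ∈ range (N + 1), f j ≠ 0 := by linarith
  have hF : 1 - ∑ j ∈ range (i + 1), f j ≠ 0 := by linarith
  have hc : 1 / (1 - ∑ j ∈ range (N + 1), f j) *
      (1 - ∑ j ∈ range (i + 1), f j - ∑ j ∈ Ioc i N, f j) = 1 := by
    rw [sub_sub, hsplit, one_div_mul_cancel hρ0]
  have hrec : ∀ k, i < k → k ≤ N →
      r k = (A k i + ∑ j ∈ Ioo i k, A k j * r j) / (lam i - lam k) := by
    intro k hik hkN
    rcases (show i + 1 ≤ k from hik).eq_or_lt with rfl | hk2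
    · rw [hr1, Ioo_add_one_right_eq_Ioc, Ioc_self, sum_empty, add_zero]
    · exact hrk k hk2 hkN
  refine eq_of_triangular_recursion (g := fun k ↦ -f k / (1 - ∑ j ∈ range (i + 1), f j))
    (fun k hik hkN ↦ sub_ne_zero.2 (hne k hik hkN)) (fun k hik hkN ↦ ?_) hrec k hik hkN
  rw [hAl k i hik, hlam i, hlam k, ← explicit_eigenvector_row_eq v f hik hkN hc hF]
  refine congrArg _ (sum_congr rfl fun j hj ↦ ?_)
  rw [hAl k j (mem_Ioo.1 hj).2]

/-- The recursively defined eigenvector components coincide with the explicit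
formula `r_i^k = -f_k/(1 - Σ_{j=0}^i f_j)` for `k = i+1,…,N`, provided `λ_i ≠ λ_k` for `k > i`. -/
theorem stmt2 (N : ℕ) (hN : 1 ≤ N) (v f : ℕ → ℝ)
    (hv : StrictMonoOn v (Set.Iic N)) (hv0 : v 0 = 0) (hvN : v N = 1)
    (hf : ∀ k, 0 < f k) (hρ : ∑ i ∈ Finset.range (N+1), f i < 1)
    (lam : ℕ → ℝ)
    (hlam : ∀ i, lam i = v i - (1/(1 - ∑ j ∈ Finset.range (N+1), f j)) *
      ∑ j ∈ Finset.Ioc i N, (v j - v i) * f j)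
    (A : ℕ → ℕ → ℝ)
    (hAd : ∀ i, A i i = lam i)
    (hAl : ∀ k j, j < k → A k j = (1/(1 - ∑ l ∈ Finset.range (N+1), f l)) * (v k - v j) * f k)
    (i : ℕ) (hi : i < N)
    (hne : ∀ k, i < k → k ≤ N → lam i ≠ lam k)
    (r : ℕ → ℝ)
    (hr1 : r (i+1) = A (i+1) i / (lam i - lam (i+1)))
    (hrk : ∀ k, i + 2 ≤ k → k ≤ N →
      r k = (A k i + ∑ j ∈ Finset.Ioo i k, A k j * r j) / (lam i - lam k)) :
    ∀ k, i + 1 ≤ k → k ≤ N → r k = -f k / (1 - ∑ j ∈ Finset.range (i+1), f j) :=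
  stmt2_general N v f hf hρ lam hlam A hAl i hne r hr1 hrk
end

section
/- Each characteristic field of the discrete velocity traffic system is linearly degenerate: for every i = 0,…,N, the gradient of λ_i (as a function of (f_0,…,f_N)) is orthogonal to the eigenvector r_i, i.e. ∇λ_i · r_i = 0. -/
/-!
Write `λ_i = v_i - L f / (1 - σ f)` with the linear forms `L g = ∑_{j > i} (v_j - v_i) g_j` and
`σ g = ∑_j g_j`; then `∇λ_i · r = -(L r (1 - σ f) + L f σ r) / (1 - σ f)²`. With
`A = ∑_{l ≤ i} f_l`, the eigenvector `r_i` agrees with `-f / (1 - A)` on the coordinates `j > i`,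
which are the only ones `L` sees, so `L r_i = -L f / (1 - A)`, while `σ r_i = (1 - σ f) / (1 - A)`.
The two terms of the numerator cancel.
-/

open Finset

theorem fderiv_div_one_sub_apply {𝕜 E : Type*} [NontriviallyNormedField 𝕜]
    [NormedAddCommGroup E] [NormedSpace 𝕜 E] (L σ : E →L[𝕜] 𝕜) {f : E} (hf : σ f ≠ 1) (d : E) :
    fderiv 𝕜 (fun g => L g / (1 - σ g)) f d
      = (L d * (1 - σ f) + L f * σ d) / (1 - σ f) ^ 2 := by
  have hden : 1 - σ f ≠ 0 := sub_ne_zero.2 hf.symm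
  have hinv : HasFDerivAt (fun g => (1 - σ g)⁻¹) (-((1 - σ f) ^ 2)⁻¹ • -σ) f :=
    (hasDerivAt_inv hden).comp_hasFDerivAt f (σ.hasFDerivAt.const_sub 1)
  simp_rw [div_eq_mul_inv]
  rw [(L.hasFDerivAt.fun_mul hinv).fderiv]
  simp only [smul_neg, neg_smul, neg_neg, add_apply, smul_apply, smul_eq_mul]
  field_simp
  ring

section WeightedSum

variable {ι R : Type*} [CommSemiring R] [TopologicalSpace R] [IsTopologicalSemiring R]

def weightedSumCLM (s : Finset ι) (w : ι → R) : (ι → R) →L[R] R :=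
  ∑ j ∈ s, w j • ContinuousLinearMap.proj j

@[simp]
theorem weightedSumCLM_apply (s : Finset ι) (w g : ι → R) :
    weightedSumCLM s w g = ∑ j ∈ s, w j * g j := by
  simp [weightedSumCLM]

end WeightedSum

theorem sum_Iic_add_sum_Ioi {ι M : Type*} [Fintype ι] [LinearOrder ι] [LocallyFiniteOrderBot ι]
    [LocallyFiniteOrderTop ι] [AddCommMonoid M] (i : ι) (g : ι → M) :
    ∑ j ∈ Iic i, g j + ∑ j ∈ Ioi i, g j = ∑ j, g j := by
  classical
  rw [← filter_ge_eq_Iic, ← filter_lt_eq_Ioi]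
  simp_rw [← not_le]
  exact sum_filter_add_sum_filter_not _ _ _

section Eigenvector

variable {ι K : Type*} [LinearOrder ι] [LocallyFiniteOrderBot ι] [LocallyFiniteOrderTop ι]
  [Field K]

def trafficEigenvector (f : ι → K) (i : ι) : ι → K := fun j =>
  if j < i then 0 else if j = i then 1 else -f j / (1 - ∑ l ∈ Iic i, f l)

theorem sum_Ioi_mul_trafficEigenvector (f w : ι → K) (i : ι) :
    ∑ j ∈ Ioi i, w j * trafficEigenvector f i j
      = -(∑ j ∈ Ioi i, w j * f j) / (1 - ∑ l ∈ Iic i, f l) := by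
  rw [← sum_neg_distrib, sum_div]
  refine sum_congr rfl fun j hj => ?_
  have hij : i < j := mem_Ioi.1 hj
  simp only [trafficEigenvector, hij.not_gt, hij.ne', if_false]
  ring

theorem sum_trafficEigenvector [Fintype ι] (f : ι → K) (i : ι)
    (hfi : ∑ l ∈ Iic i, f l ≠ 1) :
    ∑ j, trafficEigenvector f i j = (1 - ∑ j, f j) / (1 - ∑ l ∈ Iic i, f l) := by
  have hIic : ∑ j ∈ Iic i, trafficEigenvector f i j = 1 := by
    rw [sum_eq_single_of_mem i (mem_Iic.2 le_rfl) fun j hj hji => ?_]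
    · simp [trafficEigenvector]
    · simp [trafficEigenvector, lt_of_le_of_ne (mem_Iic.1 hj) hji]
  have hIoi := sum_Ioi_mul_trafficEigenvector f 1 i
  simp only [Pi.one_apply, one_mul] at hIoi
  rw [← sum_Iic_add_sum_Ioi i, ← sum_Iic_add_sum_Ioi i f, hIic, hIoi]
  field_simp [sub_ne_zero.2 hfi.symm]
  ring

end Eigenvector

theorem stmt3_general (N : ℕ) (v : Fin (N+1) → ℝ)
    (lam : Fin (N+1) → (Fin (N+1) → ℝ) → ℝ)
    (hlam : ∀ i g, lam i g =
      v i - (1/(1 - ∑ j, g j)) * ∑ j ∈ Finset.Ioi i, (v j - v i) * g j)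
    (f : Fin (N+1) → ℝ) (hf : ∀ i, 0 ≤ f i) (hρ : ∑ i, f i < 1)
    (r : Fin (N+1) → Fin (N+1) → ℝ)
    (hr : ∀ i j, r i j = if j < i then 0 else if j = i then 1
      else -f j / (1 - ∑ l ∈ Finset.Iic i, f l)) :
    ∀ i, fderiv ℝ (lam i) f (r i) = 0 := by
  intro i
  set L := weightedSumCLM (Ioi i) fun j => v j - v i
  set σ : (Fin (N+1) → ℝ) →L[ℝ] ℝ := weightedSumCLM univ 1
  have hσ : ∀ g, σ g = ∑ j, g j := by simp [σ]
  have hlam_i : lam i = fun g => v i - L g / (1 - σ g) := by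
    ext g
    rw [hlam, hσ, one_div_mul_eq_div, weightedSumCLM_apply]
  have hri : r i = trafficEigenvector f i := funext (hr i)
  have hIic : ∑ l ∈ Iic i, f l ≠ 1 :=
    ((sum_le_univ_sum_of_nonneg (s := Iic i) fun j => hf j).trans_lt hρ).ne
  rw [hlam_i, fderiv_const_sub, neg_apply,
    fderiv_div_one_sub_apply L σ (hσ f ▸ hρ.ne), hri, hσ, hσ,
    sum_trafficEigenvector f i hIic,
    weightedSumCLM_apply, weightedSumCLM_apply, sum_Ioi_mul_trafficEigenvector]
  ring

/-- Each characteristic field is linearly degenerate: the gradient of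
`λ_i` (as a function of `f`) is orthogonal to the eigenvector `r_i`, i.e. `∇λ_i · r_i = 0`
(formulated as the directional derivative of `λ_i` in the direction `r_i` vanishing). -/
theorem stmt3 (N : ℕ) (hN : 1 ≤ N) (v : Fin (N+1) → ℝ)
    (hv : StrictMono v) (hv0 : v 0 = 0) (hvN : v (Fin.last N) = 1)
    (lam : Fin (N+1) → (Fin (N+1) → ℝ) → ℝ)
    (hlam : ∀ i g, lam i g =
      v i - (1/(1 - ∑ j, g j)) * ∑ j ∈ Finset.Ioi i, (v j - v i) * g j)
    (f : Fin (N+1) → ℝ) (hf : ∀ i, 0 ≤ f i) (hρ : ∑ i, f i < 1)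
    (r : Fin (N+1) → Fin (N+1) → ℝ)
    (hr : ∀ i j, r i j = if j < i then 0 else if j = i then 1
      else -f j / (1 - ∑ l ∈ Finset.Iic i, f l)) :
    ∀ i, fderiv ℝ (lam i) f (r i) = 0 :=
  stmt3_general N v lam hlam f hf hρ r hr
end

section
/- For each i and each j with i+1 ≤ j ≤ N, the function w_i^j(f) = -f_j/(1 - Σ_{l=0}^i f_l) is a Riemann invariant for the i-th field: ∇w_i^j · r_i = 0, where r_i = (0,…,0,1, -f_{i+1}/(1-Σ_{l≤i}f_l),…,-f_N/(1-Σ_{l≤i}f_l)). -/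
/-! `w_i^j` is a quotient `φ / (1 - ψ)` of linear forms, whose derivative in a direction `v`
has numerator `φ v (1 - ψ f) + φ f ψ v`. For `v = r_i` one has `ψ r_i = 1` (only the `i`-th
entry of `r_i` survives in `Σ_{l ≤ i}`) and `φ r_i = f_j / (1 - ψ f)`, so the numerator is
`f_j - f_j = 0`. -/

theorem hasDerivAt_affine_div_affine {𝕜 : Type*} [NontriviallyNormedField 𝕜] (a b d e : 𝕜)
    (hd : d ≠ 0) :
    HasDerivAt (fun t => (a + t * b) / (d - t * e)) ((b * d + a * e) / d ^ 2) 0 := by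
  have hnum : HasDerivAt (fun t => a + t * b) b 0 := by
    simpa using ((hasDerivAt_id (0 : 𝕜)).mul_const b).const_add a
  have hden : HasDerivAt (fun t => d - t * e) (-e) 0 := by
    simpa using ((hasDerivAt_id (0 : 𝕜)).mul_const e).const_sub d
  refine (hnum.fun_div hden (by simpa using hd)).congr_deriv ?_
  simp only [zero_mul, add_zero, sub_zero]
  ring

theorem fderiv_div_sub_apply {𝕜 E : Type*} [NontriviallyNormedField 𝕜]
    [NormedAddCommGroup E] [NormedSpace 𝕜 E] (φ ψ : E →L[𝕜] 𝕜) (c : 𝕜) {x : E}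
    (hx : c - ψ x ≠ 0) (v : E) :
    fderiv 𝕜 (fun g => φ g / (c - ψ g)) x v
      = (φ v * (c - ψ x) + φ x * ψ v) / (c - ψ x) ^ 2 := by
  have hdiff : DifferentiableAt 𝕜 (fun g => φ g / (c - ψ g)) x := by
    fun_prop (disch := exact hx)
  rw [← hdiff.lineDeriv_eq_fderiv, lineDeriv]
  convert (hasDerivAt_affine_div_affine (φ x) (φ v) (c - ψ x) (ψ v) hx).deriv using 2
  ext t
  simp [sub_sub]

theorem stmt5_general (N : ℕ) (f : Fin (N+1) → ℝ)
    (i j : Fin (N+1)) (hij : i < j)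
    (h : 1 - ∑ l ∈ Finset.Iic i, f l ≠ 0)
    (r : Fin (N+1) → ℝ)
    (hr : ∀ k, r k = if k < i then 0 else if k = i then 1
      else -f k / (1 - ∑ l ∈ Finset.Iic i, f l)) :
    fderiv ℝ (fun g : Fin (N+1) → ℝ => -g j / (1 - ∑ l ∈ Finset.Iic i, g l)) f r = 0 := by
  set φ : (Fin (N+1) → ℝ) →L[ℝ] ℝ := -ContinuousLinearMap.proj j
  set ψ : (Fin (N+1) → ℝ) →L[ℝ] ℝ := ∑ l ∈ Finset.Iic i, ContinuousLinearMap.proj l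
  have hψf : ψ f = ∑ l ∈ Finset.Iic i, f l := by simp [ψ]
  have hψr : ψ r = 1 := by
    rw [show ψ r = ∑ l ∈ Finset.Iic i, r l by simp [ψ],
      Finset.sum_eq_single_of_mem i (Finset.mem_Iic.2 le_rfl)]
    · simp [hr i]
    · intro l hl hli
      rw [hr l, if_pos (lt_of_le_of_ne (Finset.mem_Iic.1 hl) hli)]
  have hrj : r j = -f j / (1 - ∑ l ∈ Finset.Iic i, f l) := by
    rw [hr j, if_neg (not_lt.2 hij.le), if_neg hij.ne']
  have hw : (fun g : Fin (N+1) → ℝ => -g j / (1 - ∑ l ∈ Finset.Iic i, g l))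
      = fun g => φ g / (1 - ψ g) := by
    ext g; simp [φ, ψ]
  rw [hw, fderiv_div_sub_apply φ ψ 1 (hψf ▸ h), hψf, hψr]
  simp only [φ, neg_apply, ContinuousLinearMap.proj_apply, hrj]
  field_simp
  ring

/-- For `i+1 ≤ j ≤ N`, the function `w_i^j(f) = -f_j/(1 - Σ_{l≤i} f_l)` is a
Riemann invariant for the `i`-th field: `∇w_i^j · r_i = 0`. -/
theorem stmt5 (N : ℕ) (hN : 1 ≤ N) (f : Fin (N+1) → ℝ)
    (i j : Fin (N+1)) (hij : i < j)
    (h : 1 - ∑ l ∈ Finset.Iic i, f l ≠ 0)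
    (r : Fin (N+1) → ℝ)
    (hr : ∀ k, r k = if k < i then 0 else if k = i then 1
      else -f k / (1 - ∑ l ∈ Finset.Iic i, f l)) :
    fderiv ℝ (fun g : Fin (N+1) → ℝ => -g j / (1 - ∑ l ∈ Finset.Iic i, g l)) f r = 0 :=
  stmt5_general N f i j hij h r hr
end

section
/- Under the substitution f_j = w_j Π_{l=0}^{j-1}(1-w_l), the eigenvalue λ_i = v_i - (1/(1-ρ)) Σ_{j=i+1}^N (v_j - v_i) f_j with ρ = Σ f_j can be written as λ_i(w) = v_i - (Σ_{j=i+1}^N (v_j - v_i) w_j Π_{l=i}^{j-1}(1-w_l)) / (Π_{j=i}^N (1-w_j)); in particular λ_i(w) does not depend on w_0,…,w_i, i.e. ∂λ_i/∂w_j = 0 for j ≤ i. -/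
open Finset

private lemma union_Iic_Ioo {n : ℕ} (i j : Fin n) (hij : i < j) :
    Finset.Iic i ∪ Finset.Ioo i j = Finset.Iio j := by
  ext x
  simp only [Finset.mem_union, Finset.mem_Iic, Finset.mem_Ioo, Finset.mem_Iio,
    Fin.lt_def, Fin.le_def] at *
  omega

private lemma disj_Iic_Ioo {n : ℕ} (i j : Fin n) :
    Disjoint (Finset.Iic i) (Finset.Ioo i j) := by
  rw [Finset.disjoint_left]
  intro x hx hx'
  simp only [Finset.mem_Iic, Finset.mem_Ioo, Fin.lt_def, Fin.le_def] at *
  omega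

private lemma union_Iic_Ioi {n : ℕ} (i : Fin n) :
    Finset.Iic i ∪ Finset.Ioi i = Finset.univ := by
  ext x
  simp [le_or_gt]

private lemma disj_Iic_Ioi {n : ℕ} (i : Fin n) :
    Disjoint (Finset.Iic i) (Finset.Ioi i) := by
  rw [Finset.disjoint_left]
  intro x hx hx'
  simp only [Finset.mem_Iic, Finset.mem_Ioi, Fin.lt_def, Fin.le_def] at *
  omega

/-- The key algebraic identity, written with intervals avoiding index `i` itself. -/
private lemma key_identity {N : ℕ} (v : Fin (N+1) → ℝ) (i : Fin (N+1))
    (u : Fin (N+1) → ℝ) (hu : ∀ l, (1:ℝ) - u l ≠ 0) :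
    v i - (1/(1 - (1 - ∏ j, (1 - u j)))) *
        ∑ j ∈ Finset.Ioi i, (v j - v i) * (u j * ∏ l ∈ Finset.Iio j, (1 - u l)) =
    v i - (∑ j ∈ Finset.Ioi i, (v j - v i) * u j * ∏ l ∈ Finset.Ioo i j, (1 - u l)) /
        ∏ j ∈ Finset.Ioi i, (1 - u j) := by
  rw [sub_sub_cancel]
  have hA : (∏ l ∈ Finset.Iic i, (1 - u l)) ≠ 0 :=
    Finset.prod_ne_zero_iff.mpr fun l _ => hu l
  have hB : (∏ l ∈ Finset.Ioi i, (1 - u l)) ≠ 0 :=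
    Finset.prod_ne_zero_iff.mpr fun l _ => hu l
  have hP : (∏ j, (1 - u j)) =
      (∏ l ∈ Finset.Iic i, (1 - u l)) * ∏ l ∈ Finset.Ioi i, (1 - u l) := by
    rw [← Finset.prod_union (disj_Iic_Ioi i), union_Iic_Ioi i]
  have hS : (∑ j ∈ Finset.Ioi i, (v j - v i) * (u j * ∏ l ∈ Finset.Iio j, (1 - u l))) =
      (∏ l ∈ Finset.Iic i, (1 - u l)) *
        ∑ j ∈ Finset.Ioi i, (v j - v i) * u j * ∏ l ∈ Finset.Ioo i j, (1 - u l) := by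
    rw [Finset.mul_sum]
    refine Finset.sum_congr rfl fun j hj => ?_
    rw [← union_Iic_Ioo i j (Finset.mem_Ioi.mp hj),
      Finset.prod_union (disj_Iic_Ioo i j)]
    ring
  rw [hP, hS]
  field_simp

/-- The key algebraic identity, as stated in the theorem (closed intervals at `i`). -/
private lemma key_identity' {N : ℕ} (v : Fin (N+1) → ℝ) (i : Fin (N+1))
    (u : Fin (N+1) → ℝ) (hu : ∀ l, (1:ℝ) - u l ≠ 0) :
    v i - (1/(1 - (1 - ∏ j, (1 - u j)))) *
        ∑ j ∈ Finset.Ioi i, (v j - v i) * (u j * ∏ l ∈ Finset.Iio j, (1 - u l)) =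
    v i - (∑ j ∈ Finset.Ioi i, (v j - v i) * u j * ∏ l ∈ Finset.Ico i j, (1 - u l)) /
        ∏ j ∈ Finset.Ici i, (1 - u j) := by
  rw [key_identity v i u hu]
  congr 1
  have h1 : (∏ j ∈ Finset.Ici i, (1 - u j)) =
      (1 - u i) * ∏ j ∈ Finset.Ioi i, (1 - u j) := by
    rw [← Finset.Ioi_insert i, Finset.prod_insert (by simp)]
  have h2 : (∑ j ∈ Finset.Ioi i, (v j - v i) * u j * ∏ l ∈ Finset.Ico i j, (1 - u l)) =
      (1 - u i) * ∑ j ∈ Finset.Ioi i, (v j - v i) * u j * ∏ l ∈ Finset.Ioo i j, (1 - u l) := by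
    rw [Finset.mul_sum]
    refine Finset.sum_congr rfl fun j hj => ?_
    rw [← Finset.Ioo_insert_left (Finset.mem_Ioi.mp hj), Finset.prod_insert (by simp)]
    ring
  rw [h1, h2, mul_div_mul_left _ _ (hu i)]

/-- Under `f_j = w_j Π_{l<j}(1-w_l)` (so `1-ρ = Π(1-w_j)`), the eigenvalue
`λ_i` can be written as
`λ_i(w) = v_i - (Σ_{j>i} (v_j - v_i) w_j Π_{l=i}^{j-1}(1-w_l)) / Π_{j=i}^N (1-w_j)`,
and `∂λ_i/∂w_j = 0` for `j ≤ i`. -/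
theorem stmt8 (N : ℕ) (hN : 1 ≤ N) (v : Fin (N+1) → ℝ) (hv : StrictMono v)
    (w : Fin (N+1) → ℝ) (hw : ∀ j, 0 < w j ∧ w j < 1)
    (lam : Fin (N+1) → (Fin (N+1) → ℝ) → ℝ)
    (hlam : ∀ i u, lam i u =
      v i - (1/(1 - (1 - ∏ j, (1 - u j)))) *
        ∑ j ∈ Finset.Ioi i, (v j - v i) * (u j * ∏ l ∈ Finset.Iio j, (1 - u l))) :
    (∀ i, lam i w =
      v i - (∑ j ∈ Finset.Ioi i, (v j - v i) * w j * ∏ l ∈ Finset.Ico i j, (1 - w l)) /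
        ∏ j ∈ Finset.Ici i, (1 - w j)) ∧
    (∀ i j : Fin (N+1), j ≤ i → fderiv ℝ (lam i) w (Pi.single j 1) = 0) := by
  have hw1 : ∀ l, (1:ℝ) - w l ≠ 0 := by
    intro l hc
    rw [sub_eq_zero] at hc
    have := (hw l).2
    linarith
  constructor
  · intro i
    rw [hlam]
    exact key_identity' v i w hw1
  · intro i j hji
    classical
    set G : (Fin (N+1) → ℝ) → ℝ := fun u =>
      v i - (∑ j ∈ Finset.Ioi i, (v j - v i) * u j * ∏ l ∈ Finset.Ioo i j, (1 - u l)) /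
        ∏ j ∈ Finset.Ioi i, (1 - u j) with hGdef
    -- `lam i` agrees with `G` near `w`
    have hUopen : IsOpen {u : Fin (N+1) → ℝ | ∀ l, (1:ℝ) - u l ≠ 0} := by
      have hset : {u : Fin (N+1) → ℝ | ∀ l, (1:ℝ) - u l ≠ 0} =
          ⋂ l, {u : Fin (N+1) → ℝ | (1:ℝ) - u l ≠ 0} := by
        ext u; simp
      rw [hset]
      refine isOpen_iInter_of_finite fun l => ?_
      have : {u : Fin (N+1) → ℝ | (1:ℝ) - u l ≠ 0} =
          (fun u : Fin (N+1) → ℝ => (1:ℝ) - u l) ⁻¹' {(0:ℝ)}ᶜ := by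
        ext u; simp
      rw [this]
      exact IsOpen.preimage (continuous_const.sub (continuous_apply l)) isOpen_compl_singleton
    have hEq : lam i =ᶠ[nhds w] G := by
      refine Filter.eventuallyEq_of_mem (hUopen.mem_nhds hw1) fun u hu => ?_
      rw [hlam]
      exact key_identity v i u hu
    rw [hEq.fderiv_eq]
    -- `G` is differentiable at `w`
    have hcoord : ∀ l : Fin (N+1), DifferentiableAt ℝ (fun u : Fin (N+1) → ℝ => u l) w :=
      fun l => (ContinuousLinearMap.proj l : (Fin (N+1) → ℝ) →L[ℝ] ℝ).differentiableAt
    have hfac : ∀ l : Fin (N+1), DifferentiableAt ℝ (fun u : Fin (N+1) → ℝ => 1 - u l) w :=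
      fun l => (differentiableAt_const _).sub (hcoord l)
    have hden : DifferentiableAt ℝ
        (fun u : Fin (N+1) → ℝ => ∏ j ∈ Finset.Ioi i, (1 - u j)) w :=
      (HasFDerivAt.finset_prod fun l _ => (hfac l).hasFDerivAt).differentiableAt
    have hnum : DifferentiableAt ℝ
        (fun u : Fin (N+1) → ℝ =>
          ∑ j ∈ Finset.Ioi i, (v j - v i) * u j * ∏ l ∈ Finset.Ioo i j, (1 - u l)) w := by
      refine DifferentiableAt.fun_sum fun j' _ => ?_
      exact ((differentiableAt_const _).mul (hcoord j')).mul
        (HasFDerivAt.finset_prod fun l _ => (hfac l).hasFDerivAt).differentiableAt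
    have hden0 : (∏ j ∈ Finset.Ioi i, (1 - w j)) ≠ 0 :=
      Finset.prod_ne_zero_iff.mpr fun l _ => hw1 l
    have hGdiff : DifferentiableAt ℝ G w := by
      have hrw : G = fun u : Fin (N+1) → ℝ =>
          v i - (∑ j ∈ Finset.Ioi i, (v j - v i) * u j * ∏ l ∈ Finset.Ioo i j, (1 - u l)) *
            (∏ j ∈ Finset.Ioi i, (1 - u j))⁻¹ := by
        funext u
        simp only [hGdef, div_eq_mul_inv]
      rw [hrw]
      exact (differentiableAt_const _).sub (hnum.mul (hden.inv hden0))
    -- `G` does not depend on coordinates `≤ i`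
    have hGind : ∀ u₁ u₂ : Fin (N+1) → ℝ, (∀ l, i < l → u₁ l = u₂ l) → G u₁ = G u₂ := by
      intro u₁ u₂ h
      simp only [hGdef]
      congr 1
      congr 1
      · refine Finset.sum_congr rfl fun j' hj' => ?_
        rw [h j' (Finset.mem_Ioi.mp hj')]
        congr 1
        refine Finset.prod_congr rfl fun l hl => ?_
        rw [h l (Finset.mem_Ioo.mp hl).1]
      · refine Finset.prod_congr rfl fun l hl => ?_
        rw [h l (Finset.mem_Ioi.mp hl)]
    -- differentiate along the line `t ↦ w + t • Pi.single j 1`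
    set c : Fin (N+1) → ℝ := Pi.single j 1 with hc
    have hL : HasDerivAt (fun t : ℝ => w + t • c) c 0 := by
      simpa using ((hasDerivAt_id (0:ℝ)).smul_const c).const_add w
    have hGfd : HasFDerivAt G (fderiv ℝ G w) ((fun t : ℝ => w + t • c) 0) := by
      simpa using hGdiff.hasFDerivAt
    have hcomp : HasDerivAt (G ∘ fun t : ℝ => w + t • c) (fderiv ℝ G w c) 0 :=
      hGfd.comp_hasDerivAt 0 hL
    have hconst : (G ∘ fun t : ℝ => w + t • c) = fun _ => G w := by
      funext t
      refine hGind _ _ fun l hl => ?_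
      have hlj : l ≠ j := fun e => absurd hji (not_le.mpr (e ▸ hl))
      simp [hc, Pi.single_eq_of_ne hlj]
    rw [hconst] at hcomp
    exact hcomp.unique (hasDerivAt_const 0 _)
end

section
/- For j > k, the partial derivative of the eigenvalue λ_k in the Riemann-invariant coordinates satisfies ∂λ_k/∂w_j = -(λ_j - λ_k)/(1 - w_j), where λ_k(w) = v_k - (Σ_{l=k+1}^N (v_l - v_k) w_l Π_{r=k}^{l-1}(1-w_r))/(Π_{l=k}^N(1-w_l)). -/
/-!
Split the numerator of `λ_k` at `j` and telescope the tail,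
`∑_{l ≥ j} u_l ∏_{j ≤ r < l} (1 - u_r) = 1 - ∏_{l ≥ j} (1 - u_l)`: this gives
`λ_k = λ_j - B / ∏_{l ≥ k} (1 - u_l)`, where `B` involves only the coordinates `u_r` with `r < j`.
Since the factor `1 - u_j` cancels in `λ_j`, the latter does not depend on `u_j`. Hence along the
line `t ↦ update u j t` we have `λ_k = λ_j - β / (1 - t)`, whose derivative at `t = u_j` is
`-β / (1 - u_j)² = (λ_k - λ_j) / (1 - u_j)`.
-/

open Finset Function

namespace Finset

variable {ι : Type*} [LinearOrder ι] [LocallyFiniteOrder ι]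

lemma prod_Ico_mul_prod_Ico {M : Type*} [CommMonoid M] (f : ι → M) {a b c : ι} (hab : a ≤ b)
    (hbc : b ≤ c) : (∏ x ∈ Ico a b, f x) * ∏ x ∈ Ico b c, f x = ∏ x ∈ Ico a c, f x := by
  rw [← prod_union (Ico_disjoint_Ico_consecutive a b c), Ico_union_Ico_eq_Ico hab hbc]

variable [LocallyFiniteOrderTop ι]

lemma Ioo_union_Ici_eq_Ioi {a b : ι} (hab : a < b) : Ioo a b ∪ Ici b = Ioi a := by
  rw [← coe_inj, coe_union, coe_Ioo, coe_Ici, coe_Ioi, Set.Ioo_union_Ici_eq_Ioi hab]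

lemma prod_Ico_mul_prod_Ici {M : Type*} [CommMonoid M] (f : ι → M) {a b : ι} (hab : a ≤ b) :
    (∏ x ∈ Ico a b, f x) * ∏ x ∈ Ici b, f x = ∏ x ∈ Ici a, f x := by
  have hdisj : Disjoint (Ico a b) (Ici b) := disjoint_left.2 fun x hx hx' =>
    (mem_Ico.1 hx).2.not_ge (mem_Ici.1 hx')
  have hunion : Ico a b ∪ Ici b = Ici a := by
    rw [← coe_inj, coe_union, coe_Ico, coe_Ici, coe_Ici, Set.Ico_union_Ici_eq_Ici hab]
  rw [← prod_union hdisj, hunion]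

lemma sum_mul_prod_Ico_one_sub {R : Type*} [CommRing R] (u : ι → R) (j : ι) :
    ∑ l ∈ Ici j, u l * ∏ r ∈ Ico j l, (1 - u r) = 1 - ∏ l ∈ Ici j, (1 - u l) := by
  rw [prod_one_sub_ordered, sub_sub_cancel]
  refine sum_congr rfl fun l hl => ?_
  congr 2
  ext r
  simp only [mem_filter, mem_Ici, mem_Ico]

end Finset

lemma Finset.prod_one_sub_update_of_notMem {ι R : Type*} [DecidableEq ι] [CommRing R]
    (u : ι → R) {s : Finset ι} {j : ι} {t : R} (hj : j ∉ s) :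
    ∏ r ∈ s, (1 - update u j t r) = ∏ r ∈ s, (1 - u r) :=
  prod_congr rfl fun r hr => by rw [update_of_ne (ne_of_mem_of_not_mem hr hj)]

lemma fderiv_apply_single_of_update_eq {ι : Type*} [Fintype ι] [DecidableEq ι]
    {f : (ι → ℝ) → ℝ} {w : ι → ℝ} {j : ι} {α β : ℝ} (hf : DifferentiableAt ℝ f w)
    (hwj : w j ≠ 1) (hline : ∀ t ≠ 1, f (update w j t) = α - β / (1 - t)) :
    fderiv ℝ f w (Pi.single j 1) = (f w - α) / (1 - w j) := by
  have hwj' : 1 - w j ≠ 0 := sub_ne_zero.2 hwj.symm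
  have hchain : HasDerivAt (fun t => f (update w j t)) (fderiv ℝ f w (Pi.single j 1)) (w j) := by
    have hf' : HasFDerivAt f (fderiv ℝ f w) (update w j (w j)) := by
      rw [update_eq_self]; exact hf.hasFDerivAt
    exact hf'.comp_hasDerivAt (w j) (hasDerivAt_update w j (w j))
  have hhyp : HasDerivAt (fun t => α - β / (1 - t)) (-β / (1 - w j) ^ 2) (w j) := by
    simp only [div_eq_mul_inv]
    exact ((((hasDerivAt_id' (w j)).const_sub 1).inv hwj').const_mul β).const_sub α
      |>.congr_deriv (by ring)
  have heq : (fun t => f (update w j t)) =ᶠ[nhds (w j)] fun t => α - β / (1 - t) :=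
    (eventually_ne_nhds hwj).mono hline
  have hfw : f w = α - β / (1 - w j) := by simpa using hline (w j) hwj
  rw [hchain.unique (hhyp.congr_of_eventuallyEq heq), hfw]
  field_simp
  ring

namespace RiemannInvariant

variable {ι : Type*} [LinearOrder ι] [LocallyFiniteOrder ι] [LocallyFiniteOrderTop ι]

noncomputable def eigenvalue (v : ι → ℝ) (k : ι) (u : ι → ℝ) : ℝ :=
  v k - (∑ l ∈ Ioi k, (v l - v k) * u l * ∏ r ∈ Ico k l, (1 - u r)) / ∏ l ∈ Ici k, (1 - u l)

variable (v u : ι → ℝ) {j k : ι}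

lemma differentiableAt_eigenvalue [Fintype ι] (hu : ∏ l ∈ Ici k, (1 - u l) ≠ 0) :
    DifferentiableAt ℝ (eigenvalue v k) u := by
  unfold eigenvalue
  fun_prop (disch := exact hu)

lemma sum_Ioi_eq_sum_Ioo_add_prod_mul (hkj : k < j) :
    ∑ l ∈ Ioi k, (v l - v k) * u l * ∏ r ∈ Ico k l, (1 - u r) =
      ∑ l ∈ Ioo k j, (v l - v k) * u l * ∏ r ∈ Ico k l, (1 - u r) +
        (∏ r ∈ Ico k j, (1 - u r)) *
          (∑ l ∈ Ioi j, (v l - v j) * u l * ∏ r ∈ Ico j l, (1 - u r) +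
            (v j - v k) * (1 - ∏ l ∈ Ici j, (1 - u l))) := by
  have hdisj : Disjoint (Ioo k j) (Ici j) := disjoint_left.2 fun x hx hx' =>
    (mem_Ioo.1 hx).2.not_ge (mem_Ici.1 hx')
  rw [← Ioo_union_Ici_eq_Ioi hkj, sum_union hdisj]
  congr 1
  calc ∑ l ∈ Ici j, (v l - v k) * u l * ∏ r ∈ Ico k l, (1 - u r)
      = ∑ l ∈ Ici j, (∏ r ∈ Ico k j, (1 - u r)) * ((v l - v j) * u l * ∏ r ∈ Ico j l, (1 - u r)
          + (v j - v k) * (u l * ∏ r ∈ Ico j l, (1 - u r))) :=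
        sum_congr rfl fun l hl => by
          rw [← prod_Ico_mul_prod_Ico _ hkj.le (mem_Ici.1 hl)]; ring
    _ = _ := by
      rw [← mul_sum, sum_add_distrib, ← mul_sum, sum_mul_prod_Ico_one_sub,
        ← add_sum_Ioi_eq_sum_Ici]
      simp

lemma eigenvalue_eq_sub_div (hkj : k < j) (hP : ∏ l ∈ Ici k, (1 - u l) ≠ 0) :
    eigenvalue v k u = eigenvalue v j u -
      (∑ l ∈ Ioo k j, (v l - v k) * u l * ∏ r ∈ Ico k l, (1 - u r) +
        (v j - v k) * ∏ r ∈ Ico k j, (1 - u r)) / ∏ l ∈ Ici k, (1 - u l) := by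
  rw [← prod_Ico_mul_prod_Ici _ hkj.le, mul_ne_zero_iff] at hP
  unfold eigenvalue
  rw [sum_Ioi_eq_sum_Ioo_add_prod_mul v u hkj, ← prod_Ico_mul_prod_Ici _ hkj.le]
  field_simp [hP.1, hP.2]
  ring

lemma eigenvalue_eq_of_ne_one (hu : u j ≠ 1) :
    eigenvalue v j u = v j -
      (∑ l ∈ Ioi j, (v l - v j) * u l * ∏ r ∈ Ioo j l, (1 - u r)) / ∏ l ∈ Ioi j, (1 - u l) := by
  have hu' : 1 - u j ≠ 0 := sub_ne_zero.2 hu.symm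
  have hsum : ∑ l ∈ Ioi j, (v l - v j) * u l * ∏ r ∈ Ico j l, (1 - u r) =
      (1 - u j) * ∑ l ∈ Ioi j, (v l - v j) * u l * ∏ r ∈ Ioo j l, (1 - u r) := by
    rw [mul_sum]
    refine sum_congr rfl fun l hl => ?_
    rw [← mul_prod_Ioo_eq_prod_Ico (mem_Ioi.1 hl)]
    ring
  rw [eigenvalue, hsum, ← mul_prod_Ioi_eq_prod_Ici, mul_div_mul_left _ _ hu']

variable [DecidableEq ι] {t : ℝ}

lemma eigenvalue_update_self (hu : u j ≠ 1) (ht : t ≠ 1) :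
    eigenvalue v j (update u j t) = eigenvalue v j u := by
  rw [eigenvalue_eq_of_ne_one v _ (by rwa [update_self]), eigenvalue_eq_of_ne_one v u hu,
    prod_one_sub_update_of_notMem u notMem_Ioi_self]
  congr 2
  refine sum_congr rfl fun l hl => ?_
  rw [update_of_ne (mem_Ioi.1 hl).ne', prod_one_sub_update_of_notMem u (by simp)]

lemma exists_eigenvalue_update_eq (hkj : k < j) (hu : ∀ r, u r ≠ 1) :
    ∃ β, ∀ t ≠ 1, eigenvalue v k (update u j t) = eigenvalue v j u - β / (1 - t) := by
  have hne : ∀ s : Finset ι, ∏ r ∈ s, (1 - u r) ≠ 0 := fun s =>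
    prod_ne_zero_iff.2 fun r _ => sub_ne_zero.2 (hu r).symm
  have hIco : j ∉ Ico k j := by simp
  refine ⟨(∑ l ∈ Ioo k j, (v l - v k) * u l * ∏ r ∈ Ico k l, (1 - u r) +
    (v j - v k) * ∏ r ∈ Ico k j, (1 - u r)) / ((∏ r ∈ Ico k j, (1 - u r)) * ∏ l ∈ Ioi j, (1 - u l)),
    fun t ht => ?_⟩
  have ht' : 1 - t ≠ 0 := sub_ne_zero.2 ht.symm
  have hP : ∏ l ∈ Ici k, (1 - update u j t l) =
      (∏ r ∈ Ico k j, (1 - u r)) * ((1 - t) * ∏ l ∈ Ioi j, (1 - u l)) := by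
    rw [← prod_Ico_mul_prod_Ici _ hkj.le, ← mul_prod_Ioi_eq_prod_Ici, update_self,
      prod_one_sub_update_of_notMem u hIco, prod_one_sub_update_of_notMem u notMem_Ioi_self]
  have hP0 : ∏ l ∈ Ici k, (1 - update u j t l) ≠ 0 := by
    rw [hP]
    exact mul_ne_zero (hne _) (mul_ne_zero ht' (hne _))
  have hB : ∑ l ∈ Ioo k j, (v l - v k) * update u j t l * ∏ r ∈ Ico k l, (1 - update u j t r) =
      ∑ l ∈ Ioo k j, (v l - v k) * u l * ∏ r ∈ Ico k l, (1 - u r) :=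
    sum_congr rfl fun l hl => by
      rw [update_of_ne (mem_Ioo.1 hl).2.ne,
        prod_one_sub_update_of_notMem u (by simpa using fun _ => (mem_Ioo.1 hl).2.le)]
  rw [eigenvalue_eq_sub_div v _ hkj hP0, eigenvalue_update_self v u (hu j) ht, hP, hB,
    prod_one_sub_update_of_notMem u hIco]
  field_simp [hne]

end RiemannInvariant

theorem stmt9_general (N : ℕ) (v : Fin (N+1) → ℝ)
    (w : Fin (N+1) → ℝ) (hw : ∀ j, 0 < w j ∧ w j < 1)
    (lam : Fin (N+1) → (Fin (N+1) → ℝ) → ℝ)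
    (hlam : ∀ k u, lam k u =
      v k - (∑ l ∈ Finset.Ioi k, (v l - v k) * u l * ∏ r ∈ Finset.Ico k l, (1 - u r)) /
        ∏ l ∈ Finset.Ici k, (1 - u l)) :
    ∀ j k : Fin (N+1), k < j →
      fderiv ℝ (lam k) w (Pi.single j 1) = -(lam j w - lam k w) / (1 - w j) := by
  intro j k hkj
  obtain rfl : lam = RiemannInvariant.eigenvalue v := funext fun k => funext (hlam k)
  have hw1 : ∀ r, w r ≠ 1 := fun r => (hw r).2.ne
  have hP : ∏ l ∈ Ici k, (1 - w l) ≠ 0 :=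
    prod_ne_zero_iff.2 fun r _ => sub_ne_zero.2 (hw1 r).symm
  obtain ⟨β, hβ⟩ := RiemannInvariant.exists_eigenvalue_update_eq v w hkj hw1
  rw [fderiv_apply_single_of_update_eq (RiemannInvariant.differentiableAt_eigenvalue v w hP)
    (hw1 j) hβ]
  ring

/-- For `j > k`, the partial derivative of the eigenvalue in Riemann-invariant
coordinates satisfies `∂λ_k/∂w_j = -(λ_j - λ_k)/(1 - w_j)`. -/
theorem stmt9 (N : ℕ) (hN : 1 ≤ N) (v : Fin (N+1) → ℝ)
    (hv : StrictMono v) (hv0 : v 0 = 0) (hvN : v (Fin.last N) = 1)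
    (w : Fin (N+1) → ℝ) (hw : ∀ j, 0 < w j ∧ w j < 1)
    (lam : Fin (N+1) → (Fin (N+1) → ℝ) → ℝ)
    (hlam : ∀ k u, lam k u =
      v k - (∑ l ∈ Finset.Ioi k, (v l - v k) * u l * ∏ r ∈ Finset.Ico k l, (1 - u r)) /
        ∏ l ∈ Finset.Ici k, (1 - u l)) :
    ∀ j k : Fin (N+1), k < j →
      fderiv ℝ (lam k) w (Pi.single j 1) = -(lam j w - lam k w) / (1 - w j) :=
  stmt9_general N v w hw lam hlam
end

section
/- For j > k, the difference of eigenvalues satisfies λ_j - λ_k = (v_j - v_k)·(1 - Σ_{l=0}^j f_l)/(1-ρ) + (1/(1-ρ)) Σ_{l=k+1}^j (v_l - v_k) f_l, where λ_i = v_i - (1/(1-ρ)) Σ_{l=i+1}^N (v_l - v_i) f_l and ρ = Σ_{l=0}^N f_l. In particular, if f_l ≥ 0 for all l and Σ_{l=0}^j f_l < 1, then λ_j > λ_k whenever j > k (strict hyperbolicity on this region). -/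
/-!
Moving the base point of the tail sum `Σ_{l>i} (v_l - v_i) f_l` from `k` to `j` splits off the
block `Σ_{k<l≤j} (v_l - v_k) f_l` and shifts the rest by `(v_j - v_k) Σ_{l>j} f_l`. Writing
`Σ_{l>j} f_l = ρ - Σ_{l≤j} f_l` and combining with `v_j - v_k` over the denominator `1 - ρ` gives the
identity. For `f ≥ 0` and `v` increasing, both of its terms are nonnegative and the first is positive.
-/

open Finset

namespace Hyperbolicity

variable {K : Type*}

theorem sum_range_succ_add_sum_Ioc [AddCommMonoid K] (f : ℕ → K) {j N : ℕ} (hjN : j ≤ N) :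
    ∑ l ∈ range (j + 1), f l + ∑ l ∈ Ioc j N, f l = ∑ l ∈ range (N + 1), f l := by
  rw [← Ico_add_one_add_one_eq_Ioc, sum_range_add_sum_Ico f (by omega)]

theorem sum_Ioc_sub_mul_sub_sum_Ioc_sub_mul [CommRing K] (v f : ℕ → K) {k j N : ℕ}
    (hkj : k ≤ j) (hjN : j ≤ N) :
    ∑ l ∈ Ioc k N, (v l - v k) * f l - ∑ l ∈ Ioc j N, (v l - v j) * f l =
      ∑ l ∈ Ioc k j, (v l - v k) * f l + (v j - v k) * ∑ l ∈ Ioc j N, f l := by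
  rw [← sum_Ioc_consecutive _ hkj hjN, mul_sum, add_sub_assoc, ← sum_sub_distrib]
  congr 1
  exact sum_congr rfl fun l _ => by ring

theorem sum_Ioc_sub_mul_nonneg [CommRing K] [PartialOrder K] [IsOrderedRing K] {v f : ℕ → K}
    {k j : ℕ} (hv : MonotoneOn v (Set.Icc k j)) (hf : ∀ l, 0 ≤ f l) :
    0 ≤ ∑ l ∈ Ioc k j, (v l - v k) * f l := by
  refine sum_nonneg fun l hl => mul_nonneg (sub_nonneg.2 ?_) (hf l)
  obtain ⟨hkl, hlj⟩ := mem_Ioc.1 hl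
  exact hv ⟨le_rfl, hkl.le.trans hlj⟩ ⟨hkl.le, hlj⟩ hkl.le

noncomputable def eigenvalue [Field K] (N : ℕ) (v f : ℕ → K) (i : ℕ) : K :=
  v i - (1 / (1 - ∑ l ∈ range (N + 1), f l)) * ∑ l ∈ Ioc i N, (v l - v i) * f l

theorem eigenvalue_sub_eigenvalue [Field K] {N : ℕ} (v f : ℕ → K)
    (hρ : 1 - ∑ l ∈ range (N + 1), f l ≠ 0) {j k : ℕ} (hkj : k ≤ j) (hjN : j ≤ N) :
    eigenvalue N v f j - eigenvalue N v f k =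
      (v j - v k) * (1 - ∑ l ∈ range (j + 1), f l) / (1 - ∑ l ∈ range (N + 1), f l) +
        (1 / (1 - ∑ l ∈ range (N + 1), f l)) * ∑ l ∈ Ioc k j, (v l - v k) * f l := by
  have hsplit := sum_Ioc_sub_mul_sub_sum_Ioc_sub_mul v f hkj hjN
  have hρsplit := sum_range_succ_add_sum_Ioc f hjN
  unfold eigenvalue
  field_simp
  linear_combination hsplit + (v j - v k) * hρsplit

theorem eigenvalue_lt_eigenvalue [Field K] [LinearOrder K] [IsStrictOrderedRing K] {N : ℕ}
    {v f : ℕ → K} (hv : StrictMonoOn v (Set.Iic N)) (hρ : ∑ l ∈ range (N + 1), f l < 1)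
    (hf : ∀ l, 0 ≤ f l) {j k : ℕ} (hkj : k < j) (hjN : j ≤ N)
    (hj : ∑ l ∈ range (j + 1), f l < 1) :
    eigenvalue N v f k < eigenvalue N v f j := by
  have hvjk : v k < v j := hv (by simp only [Set.mem_Iic]; omega) hjN hkj
  have hmono : MonotoneOn v (Set.Icc k j) :=
    (hv.mono fun l hl => hl.2.trans hjN).monotoneOn
  have hfirst : 0 < (v j - v k) * (1 - ∑ l ∈ range (j + 1), f l) /
      (1 - ∑ l ∈ range (N + 1), f l) :=
    div_pos (mul_pos (sub_pos.2 hvjk) (sub_pos.2 hj)) (sub_pos.2 hρ)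
  have hsecond : 0 ≤ (1 / (1 - ∑ l ∈ range (N + 1), f l)) * ∑ l ∈ Ioc k j, (v l - v k) * f l :=
    mul_nonneg (one_div_nonneg.2 (sub_pos.2 hρ).le) (sum_Ioc_sub_mul_nonneg hmono hf)
  rw [← sub_pos, eigenvalue_sub_eigenvalue v f (sub_pos.2 hρ).ne' hkj.le hjN]
  exact add_pos_of_pos_of_nonneg hfirst hsecond

end Hyperbolicity

open Hyperbolicity in
theorem stmt10_general (N : ℕ) (v f : ℕ → ℝ)
    (hv : StrictMonoOn v (Set.Iic N))
    (hρ : ∑ l ∈ Finset.range (N+1), f l < 1)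
    (lam : ℕ → ℝ)
    (hlam : ∀ i, lam i = v i - (1/(1 - ∑ l ∈ Finset.range (N+1), f l)) *
      ∑ l ∈ Finset.Ioc i N, (v l - v i) * f l) :
    ∀ j k, k < j → j ≤ N →
      (lam j - lam k = (v j - v k) * (1 - ∑ l ∈ Finset.range (j+1), f l) /
          (1 - ∑ l ∈ Finset.range (N+1), f l) +
        (1/(1 - ∑ l ∈ Finset.range (N+1), f l)) * ∑ l ∈ Finset.Ioc k j, (v l - v k) * f l) ∧
      ((∀ l, 0 ≤ f l) → ∑ l ∈ Finset.range (j+1), f l < 1 → lam k < lam j) := by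
  obtain rfl : lam = eigenvalue N v f := funext hlam
  intro j k hkj hjN
  exact ⟨eigenvalue_sub_eigenvalue v f (sub_pos.2 hρ).ne' hkj.le hjN,
    fun hf hj => eigenvalue_lt_eigenvalue hv hρ hf hkj hjN hj⟩

/-- For `j > k`,
`λ_j - λ_k = (v_j - v_k)(1 - Σ_{l=0}^j f_l)/(1-ρ) + (1/(1-ρ)) Σ_{l=k+1}^j (v_l - v_k) f_l`;
in particular if `f ≥ 0` and `Σ_{l=0}^j f_l < 1` then `λ_j > λ_k` (strict hyperbolicity). -/
theorem stmt10 (N : ℕ) (hN : 1 ≤ N) (v f : ℕ → ℝ)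
    (hv0 : v 0 = 0) (hvN : v N = 1) (hv : StrictMonoOn v (Set.Iic N))
    (hρ : ∑ l ∈ Finset.range (N+1), f l < 1)
    (lam : ℕ → ℝ)
    (hlam : ∀ i, lam i = v i - (1/(1 - ∑ l ∈ Finset.range (N+1), f l)) *
      ∑ l ∈ Finset.Ioc i N, (v l - v i) * f l) :
    ∀ j k, k < j → j ≤ N →
      (lam j - lam k = (v j - v k) * (1 - ∑ l ∈ Finset.range (j+1), f l) /
          (1 - ∑ l ∈ Finset.range (N+1), f l) +
        (1/(1 - ∑ l ∈ Finset.range (N+1), f l)) * ∑ l ∈ Finset.Ioc k j, (v l - v k) * f l) ∧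
      ((∀ l, 0 ≤ f l) → ∑ l ∈ Finset.range (j+1), f l < 1 → lam k < lam j) :=
  stmt10_general N v f hv hρ lam hlam
end

section
/- The functions N_k(w) = Π_{j=k}^N (1-w_j) satisfy the richness identity (λ_j - λ_k) ∂N_k/∂w_j = N_k ∂λ_k/∂w_j for all j, k ∈ {0,…,N}, where λ_k(w) are the eigenvalues of the discrete velocity traffic system in Riemann-invariant coordinates. -/
/-!
For `k < N` the eigenvalues satisfy `λ_k = λ_{k+1} - (v_{k+1} - v_k) / N_{k+1}`: write
`λ_k = (v_k - T_k) / N_k` with `T_k = Σ_{l ≥ k} v_l w_l Π_{k ≤ r < l} (1 - w_r)` (the telescoping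
identity `N_k = 1 - Σ_{l ≥ k} w_l Π_{k ≤ r < l} (1 - w_r)` absorbs the `v_k` terms) and peel off
the common factor `1 - w_k` of `T_k - v_k w_k` and `N_k`. So `λ_k` does not depend on `w_k`, and
backward induction on `k` gives `∂λ_k/∂w_j = (λ_k - λ_j) / (1 - w_j)` for `j ≥ k`, `0` for `j < k`.
As `∂N_k/∂w_j = -N_k / (1 - w_j)` for `j ≥ k` and `0` otherwise, the richness identity follows.
-/

open Finset Filter Topology ContinuousLinearMap

namespace DiscreteVelocity

variable {n : ℕ}

noncomputable section

def tailProd (k : Fin (n + 1)) (u : Fin (n + 1) → ℝ) : ℝ :=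
  ∏ l ∈ Ici k, (1 - u l)

def weightedTail (v : Fin (n + 1) → ℝ) (k : Fin (n + 1)) (u : Fin (n + 1) → ℝ) : ℝ :=
  ∑ l ∈ Ici k, v l * u l * ∏ r ∈ Ico k l, (1 - u r)

def eigenvalue (v : Fin (n + 1) → ℝ) (k : Fin (n + 1)) (u : Fin (n + 1) → ℝ) : ℝ :=
  v k - (∑ l ∈ Ioi k, (v l - v k) * u l * ∏ r ∈ Ico k l, (1 - u r)) / tailProd k u

end

variable (v : Fin (n + 1) → ℝ) {u : Fin (n + 1) → ℝ}

theorem tailProd_eq_one_sub_weightedTail (k : Fin (n + 1)) (u : Fin (n + 1) → ℝ) :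
    tailProd k u = 1 - weightedTail 1 k u := by
  have hfilter : ∀ l, {r ∈ Ici k | r < l} = Ico k l := fun l => by ext; simp
  rw [tailProd, prod_one_sub_ordered]
  simp only [weightedTail, Pi.one_apply, one_mul, hfilter]

theorem eigenvalue_eq_div {k : Fin (n + 1)} (hP : tailProd k u ≠ 0) :
    eigenvalue v k u = (v k - weightedTail v k u) / tailProd k u := by
  have hsum : ∑ l ∈ Ioi k, (v l - v k) * u l * ∏ r ∈ Ico k l, (1 - u r)
      = weightedTail v k u - v k * weightedTail 1 k u := by
    rw [weightedTail, weightedTail, mul_sum, ← sum_sub_distrib, Ici_eq_cons_Ioi, sum_cons,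
      Ico_self, prod_empty]
    simp only [Pi.one_apply]
    ring_nf
    exact sum_congr rfl fun l _ => by ring
  rw [eigenvalue, hsum, eq_div_iff hP, sub_mul, div_mul_cancel₀ _ hP,
    tailProd_eq_one_sub_weightedTail]
  ring

theorem tailProd_castSucc (i : Fin n) (u : Fin (n + 1) → ℝ) :
    tailProd i.castSucc u = (1 - u i.castSucc) * tailProd i.succ u := by
  rw [tailProd, tailProd, Ici_eq_cons_Ioi, prod_cons, ← Fin.orderSucc_castSucc,
    Ici_succ_eq_Ioi_of_not_isMax (Fin.castSucc_lt_last i).not_isMax]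

theorem weightedTail_castSucc (i : Fin n) (u : Fin (n + 1) → ℝ) :
    weightedTail v i.castSucc u
      = v i.castSucc * u i.castSucc + (1 - u i.castSucc) * weightedTail v i.succ u := by
  rw [weightedTail, weightedTail, Ici_eq_cons_Ioi, sum_cons, Ico_self, prod_empty, mul_one,
    mul_sum, ← Ici_succ_eq_Ioi_of_not_isMax (Fin.castSucc_lt_last i).not_isMax,
    Fin.orderSucc_castSucc]
  congr 1
  refine sum_congr rfl fun l hl => ?_
  have hlt : i.castSucc < l := Fin.castSucc_lt_iff_succ_le.mpr (mem_Ici.mp hl)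
  rw [← insert_Ico_succ_left_eq_Ico hlt, Fin.orderSucc_castSucc,
    prod_insert fun h => (mem_Ico.mp h).1.not_gt i.castSucc_lt_succ]
  ring

theorem eigenvalue_last (u : Fin (n + 1) → ℝ) :
    eigenvalue v (Fin.last n) u = v (Fin.last n) := by
  simp [eigenvalue, Ioi_eq_empty.mpr fun x _ => Fin.le_last x]

theorem eigenvalue_castSucc (i : Fin n) (hP : tailProd i.castSucc u ≠ 0) :
    eigenvalue v i.castSucc u
      = eigenvalue v i.succ u - (v i.succ - v i.castSucc) / tailProd i.succ u := by
  obtain ⟨hk, hP₁⟩ := mul_ne_zero_iff.mp (tailProd_castSucc i u ▸ hP)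
  rw [eigenvalue_eq_div v hP, eigenvalue_eq_div v hP₁, weightedTail_castSucc, tailProd_castSucc]
  field_simp
  ring

theorem hasFDerivAt_tailProd (k : Fin (n + 1)) (u : Fin (n + 1) → ℝ) :
    HasFDerivAt (tailProd k)
      (∑ i ∈ Ici k, (∏ l ∈ (Ici k).erase i, (1 - u l)) • -(proj i : (Fin (n + 1) → ℝ) →L[ℝ] ℝ))
      u :=
  HasFDerivAt.finsetProd fun i _ => (hasFDerivAt_apply i u).const_sub 1

theorem fderiv_tailProd_single (k : Fin (n + 1)) {j : Fin (n + 1)} (hj : u j ≠ 1) :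
    fderiv ℝ (tailProd k) u (Pi.single j 1)
      = if k ≤ j then -tailProd k u / (1 - u j) else 0 := by
  rw [(hasFDerivAt_tailProd k u).fderiv]
  simp only [smul_neg, sum_neg_distrib, neg_apply, _root_.sum_apply, smul_apply,
    proj_apply, Pi.single_apply, smul_eq_mul, mul_ite, mul_one, mul_zero,
    sum_ite_eq', mem_Ici]
  split_ifs with hkj
  · rw [tailProd, ← mul_prod_erase _ _ (mem_Ici.mpr hkj)]
    field_simp [sub_ne_zero.mpr hj.symm]
  · exact neg_zero

theorem differentiableAt_eigenvalue (k : Fin (n + 1)) (hP : tailProd k u ≠ 0) :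
    DifferentiableAt ℝ (eigenvalue v k) u := by
  unfold eigenvalue
  have := (hasFDerivAt_tailProd k u).differentiableAt
  fun_prop (disch := assumption)

theorem tailProd_ne_zero (k : Fin (n + 1)) (hu : ∀ r, u r ≠ 1) : tailProd k u ≠ 0 :=
  prod_ne_zero_iff.mpr fun r _ => sub_ne_zero.mpr (hu r).symm

theorem fderiv_eigenvalue_single (hu : ∀ r, u r ≠ 1) (k j : Fin (n + 1)) :
    fderiv ℝ (eigenvalue v k) u (Pi.single j 1)
      = if k ≤ j then (eigenvalue v k u - eigenvalue v j u) / (1 - u j) else 0 := by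
  induction k using Fin.reverseInduction with
  | last =>
    have hconst : eigenvalue v (Fin.last n) = fun _ => v (Fin.last n) :=
      funext (eigenvalue_last v)
    rcases (Fin.le_last j).lt_or_eq with hj | rfl
    · simp [hconst, hj.not_ge]
    · simp [hconst]
  | cast i ih =>
    set c := v i.succ - v i.castSucc
    have hP := tailProd_ne_zero i.succ hu
    have hrec : eigenvalue v i.castSucc =ᶠ[𝓝 u]
        fun x => eigenvalue v i.succ x - c * (tailProd i.succ x)⁻¹ := by
      filter_upwards [(hasFDerivAt_tailProd i.castSucc u).continuousAt.eventually_ne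
        (tailProd_ne_zero i.castSucc hu)] with x hx
      rw [eigenvalue_castSucc v i hx, div_eq_mul_inv]
    have hinv : HasFDerivAt (fun x => (tailProd i.succ x)⁻¹)
        ((-(tailProd i.succ u ^ 2)⁻¹) • fderiv ℝ (tailProd i.succ) u) u :=
      (hasDerivAt_inv hP).comp_hasFDerivAt u
        (hasFDerivAt_tailProd i.succ u).differentiableAt.hasFDerivAt
    have hderiv := ((differentiableAt_eigenvalue v i.succ hP).hasFDerivAt.sub
      (hinv.const_mul c)).congr_of_eventuallyEq hrec
    rw [hderiv.fderiv]
    simp only [sub_apply, smul_apply, smul_eq_mul, ih, fderiv_tailProd_single i.succ (hu j)]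
    by_cases hj : i.succ ≤ j
    · simp only [if_pos hj, if_pos (i.castSucc_lt_succ.le.trans hj)]
      rw [hrec.eq_of_nhds]
      field_simp
      ring
    · rw [if_neg hj, if_neg hj, mul_zero, mul_zero, sub_zero]
      split_ifs with hkj
      · obtain rfl : j = i.castSucc := le_antisymm (Fin.le_castSucc_iff.mpr (not_le.mp hj)) hkj
        simp
      · rfl

end DiscreteVelocity

open DiscreteVelocity in
theorem stmt11_general (N : ℕ) (v : Fin (N+1) → ℝ)
    (w : Fin (N+1) → ℝ) (hw : ∀ j, 0 < w j ∧ w j < 1)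
    (lam : Fin (N+1) → (Fin (N+1) → ℝ) → ℝ)
    (hlam : ∀ k u, lam k u =
      v k - (∑ l ∈ Finset.Ioi k, (v l - v k) * u l * ∏ r ∈ Finset.Ico k l, (1 - u r)) /
        ∏ l ∈ Finset.Ici k, (1 - u l))
    (Nf : Fin (N+1) → (Fin (N+1) → ℝ) → ℝ)
    (hNf : ∀ k u, Nf k u = ∏ l ∈ Finset.Ici k, (1 - u l)) :
    ∀ j k : Fin (N+1),
      (lam j w - lam k w) * fderiv ℝ (Nf k) w (Pi.single j 1)
        = Nf k w * fderiv ℝ (lam k) w (Pi.single j 1) := by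
  obtain rfl : lam = eigenvalue v := funext₂ hlam
  obtain rfl : Nf = tailProd := funext₂ hNf
  have hw₁ : ∀ r, w r ≠ 1 := fun r => (hw r).2.ne
  intro j k
  rw [fderiv_tailProd_single k (hw₁ j), fderiv_eigenvalue_single v hw₁]
  split_ifs <;> ring

/-- Richness identity: the functions `N_k(w) = Π_{j≥k}(1-w_j)` satisfy
`(λ_j - λ_k) ∂N_k/∂w_j = N_k ∂λ_k/∂w_j` for all `j, k`. -/
theorem stmt11 (N : ℕ) (hN : 1 ≤ N) (v : Fin (N+1) → ℝ)
    (hv : StrictMono v) (hv0 : v 0 = 0) (hvN : v (Fin.last N) = 1)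
    (w : Fin (N+1) → ℝ) (hw : ∀ j, 0 < w j ∧ w j < 1)
    (lam : Fin (N+1) → (Fin (N+1) → ℝ) → ℝ)
    (hlam : ∀ k u, lam k u =
      v k - (∑ l ∈ Finset.Ioi k, (v l - v k) * u l * ∏ r ∈ Finset.Ico k l, (1 - u r)) /
        ∏ l ∈ Finset.Ici k, (1 - u l))
    (Nf : Fin (N+1) → (Fin (N+1) → ℝ) → ℝ)
    (hNf : ∀ k u, Nf k u = ∏ l ∈ Finset.Ici k, (1 - u l)) :
    ∀ j k : Fin (N+1),
      (lam j w - lam k w) * fderiv ℝ (Nf k) w (Pi.single j 1)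
        = Nf k w * fderiv ℝ (lam k) w (Pi.single j 1) :=
  stmt11_general N v w hw lam hlam Nf hNf
end

section
/- For the equilibrium distribution f^e(ρ,v) = δ_0(v)(ρ - F - (γ-1)(F-E)/(1-λ)) + ((F-E)/(1-λ))·g(v)/v + δ_1(v)(F - (F-E)/(1-λ)), the second-order interaction moment satisfies ∫∫_{v̂<v} (v-v̂)² f^e(ρ,v) ∂_ρ f^e(ρ,v̂) dv̂ dv = E - (F' - E')F - F'E, where λ = ∫₀¹ v g(v)dv, γ = ∫₀¹ g(v)/v dv, and the key combinatorial identity ∫∫_{v̂<v} (v/v̂ + v̂/v - 2) g(v)g(v̂) dv̂ dv = γλ - 1 is used. -/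
open MeasureTheory

/-- For the equilibrium distribution
`f^e(ρ,v) = a δ_0(v) + c g(v)/v + b δ_1(v)` with
`a = ρ - F - (γ-1)(F-E)/(1-λ)`, `c = (F-E)/(1-λ)`, `b = F - (F-E)/(1-λ)` (and `a',b',c'` the
corresponding coefficients of `∂_ρ f^e`), the second-order interaction moment
`∫∫_{v̂<v} (v-v̂)² f^e(ρ,v) ∂_ρ f^e(ρ,v̂) dv̂ dv`, which expands into the four terms below,
equals `E - (F' - E')F - F'E`. -/
theorem stmt15 (g : ℝ → ℝ) (hg : ∀ v ∈ Set.Ioc (0:ℝ) 1, 0 ≤ g v)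
    (hgint : IntegrableOn g (Set.Ioc (0:ℝ) 1))
    (lam gam : ℝ)
    (hg1 : ∫ v in Set.Ioc (0:ℝ) 1, g v = 1)
    (hlam : ∫ v in Set.Ioc (0:ℝ) 1, v * g v = lam)
    (hgam : ∫ v in Set.Ioc (0:ℝ) 1, g v / v = gam)
    (hgamInt : IntegrableOn (fun v => g v / v) (Set.Ioc (0:ℝ) 1))
    (hlam1 : lam ≠ 1)
    (ρ F E F' E' : ℝ)
    (a c b a' c' b' : ℝ)
    (ha : a = ρ - F - (gam - 1) * (F - E) / (1 - lam))
    (hc : c = (F - E) / (1 - lam))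
    (hb : b = F - (F - E) / (1 - lam))
    (ha' : a' = 1 - F' - (gam - 1) * (F' - E') / (1 - lam))
    (hc' : c' = (F' - E') / (1 - lam))
    (hb' : b' = F' - (F' - E') / (1 - lam))
    (hD1 : IntegrableOn (fun v => (1 - v)^2 * g v / v) (Set.Ioc (0:ℝ) 1))
    (hD2 : IntegrableOn (fun p : ℝ × ℝ => (p.1 - p.2)^2 * (g p.1 / p.1) * (g p.2 / p.2))
      {p : ℝ × ℝ | p.1 ∈ Set.Ioc (0:ℝ) 1 ∧ p.2 ∈ Set.Ioc (0:ℝ) 1 ∧ p.2 < p.1}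
      (volume.prod volume)) :
    c * lam * a'
      + c * c' *
        ∫ p in {p : ℝ × ℝ | p.1 ∈ Set.Ioc (0:ℝ) 1 ∧ p.2 ∈ Set.Ioc (0:ℝ) 1 ∧ p.2 < p.1},
          (p.1 - p.2)^2 * (g p.1 / p.1) * (g p.2 / p.2) ∂(volume.prod volume)
      + b * a'
      + b * c' * ∫ v in Set.Ioc (0:ℝ) 1, (1 - v)^2 * g v / v
      = E - (F' - E') * F - F' * E := by
  have h1lam : (1:ℝ) - lam ≠ 0 := sub_ne_zero.mpr (Ne.symm hlam1)
  -- integrability of v * g v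
  have hIk : IntegrableOn (fun v => v * g v) (Set.Ioc (0:ℝ) 1) := by
    refine Integrable.mono' hgint.abs
      (aestronglyMeasurable_id.mul hgint.aestronglyMeasurable) ?_
    filter_upwards [ae_restrict_mem measurableSet_Ioc] with v hv
    have h1 : |v| ≤ 1 := by rw [abs_of_pos hv.1]; exact hv.2
    calc ‖v * g v‖ = |v| * |g v| := abs_mul _ _
      _ ≤ 1 * |g v| := by gcongr
      _ = |g v| := one_mul _
  -- the single integral
  have hsingle : ∫ v in Set.Ioc (0:ℝ) 1, (1 - v)^2 * g v / v = gam - 2 + lam := by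
    have heq : ∫ v in Set.Ioc (0:ℝ) 1, (1 - v)^2 * g v / v
        = ∫ v in Set.Ioc (0:ℝ) 1, (g v / v - 2 * g v + v * g v) := by
      refine setIntegral_congr_fun measurableSet_Ioc (fun v hv => ?_)
      have hv0 : v ≠ 0 := ne_of_gt hv.1
      field_simp
      ring
    have Isub : Integrable (fun v => g v / v - 2 * g v)
        (volume.restrict (Set.Ioc (0:ℝ) 1)) := hgamInt.sub (hgint.const_mul 2)
    have e1 : ∫ v in Set.Ioc (0:ℝ) 1, (g v / v - 2 * g v + v * g v)
        = (∫ v in Set.Ioc (0:ℝ) 1, (g v / v - 2 * g v)) + ∫ v in Set.Ioc (0:ℝ) 1, v * g v :=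
      integral_add Isub hIk
    have e2 : ∫ v in Set.Ioc (0:ℝ) 1, (g v / v - 2 * g v)
        = (∫ v in Set.Ioc (0:ℝ) 1, g v / v) - ∫ v in Set.Ioc (0:ℝ) 1, 2 * g v :=
      integral_sub hgamInt (hgint.const_mul 2)
    rw [heq, e1, e2, integral_const_mul, hgam, hg1, hlam]
    ring
  -- sets
  set S : Set (ℝ × ℝ) :=
    {p : ℝ × ℝ | p.1 ∈ Set.Ioc (0:ℝ) 1 ∧ p.2 ∈ Set.Ioc (0:ℝ) 1 ∧ p.2 < p.1} with hSdef
  set S' : Set (ℝ × ℝ) :=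
    {p : ℝ × ℝ | p.1 ∈ Set.Ioc (0:ℝ) 1 ∧ p.2 ∈ Set.Ioc (0:ℝ) 1 ∧ p.1 < p.2} with hS'def
  set f : ℝ × ℝ → ℝ := fun p => (p.1 - p.2)^2 * (g p.1 / p.1) * (g p.2 / p.2) with hfdef
  have hSm : MeasurableSet S := by
    apply MeasurableSet.inter (measurable_fst measurableSet_Ioc)
    exact MeasurableSet.inter (measurable_snd measurableSet_Ioc)
      (measurableSet_lt measurable_snd measurable_fst)
  have hS'm : MeasurableSet S' := by
    apply MeasurableSet.inter (measurable_fst measurableSet_Ioc)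
    exact MeasurableSet.inter (measurable_snd measurableSet_Ioc)
      (measurableSet_lt measurable_fst measurable_snd)
  have hpre : (Prod.swap ⁻¹' S' : Set (ℝ × ℝ)) = S := by
    ext p
    simp only [hSdef, hS'def, Set.mem_preimage, Set.mem_setOf_eq, Prod.fst_swap, Prod.snd_swap]
    tauto
  have hfswap : ∀ p : ℝ × ℝ, f (Prod.swap p) = f p := by
    intro p
    simp only [hfdef, Prod.fst_swap, Prod.snd_swap]
    ring
  have hmapswap : Measure.map Prod.swap ((volume : Measure ℝ).prod volume)
      = (volume : Measure ℝ).prod volume := Measure.prod_swap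
  -- swap symmetry of the double integral
  have hemb : MeasurableEmbedding (Prod.swap : ℝ × ℝ → ℝ × ℝ) :=
    (MeasurableEquiv.prodComm (α := ℝ) (β := ℝ)).measurableEmbedding
  have hswapint : ∫ p in S', f p ∂(volume.prod volume) = ∫ p in S, f p ∂(volume.prod volume) := by
    conv_lhs => rw [← hmapswap]
    rw [hemb.setIntegral_map, hpre]
    exact setIntegral_congr_fun hSm (fun p _ => hfswap p)
  have hS'int : IntegrableOn f S' (volume.prod volume) := by
    have h := (integrableOn_map_equiv (MeasurableEquiv.prodComm (α := ℝ) (β := ℝ)) (f := f)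
      (μ := (volume : Measure ℝ).prod volume) (s := S'))
    have hmap' : Measure.map (⇑(MeasurableEquiv.prodComm (α := ℝ) (β := ℝ)))
        ((volume : Measure ℝ).prod volume) = (volume : Measure ℝ).prod volume := hmapswap
    rw [hmap'] at h
    rw [h]
    have h2 : (f ∘ ⇑(MeasurableEquiv.prodComm (α := ℝ) (β := ℝ))) = f := by
      funext p; exact hfswap p
    have h3 : ((⇑(MeasurableEquiv.prodComm (α := ℝ) (β := ℝ))) ⁻¹' S' : Set (ℝ × ℝ)) = S := hpre
    rw [h2, h3]
    exact hD2
  -- union is a.e. the full square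
  have hdiag : (volume.prod volume : Measure (ℝ × ℝ)) {p : ℝ × ℝ | p.1 = p.2} = 0 := by
    rw [Measure.measure_prod_null ((isClosed_eq continuous_fst continuous_snd).measurableSet)]
    refine Filter.Eventually.of_forall (fun x => ?_)
    have : (Prod.mk x ⁻¹' {p : ℝ × ℝ | p.1 = p.2}) = {x} := by
      ext y; simp [eq_comm]
    simp [this]
  have hunion_ae : ((S ∪ S' : Set (ℝ × ℝ))) =ᵐ[(volume.prod volume : Measure (ℝ × ℝ))]
      (Set.Ioc (0:ℝ) 1 ×ˢ Set.Ioc (0:ℝ) 1) := by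
    rw [MeasureTheory.ae_eq_set]
    constructor
    · have h1 : (S ∪ S') \ (Set.Ioc (0:ℝ) 1 ×ˢ Set.Ioc (0:ℝ) 1) = ∅ := by
        rw [Set.diff_eq_empty]
        intro p hp
        rcases hp with hp | hp <;> exact ⟨hp.1, hp.2.1⟩
      simp [h1]
    · refine measure_mono_null ?_ hdiag
      intro p hp
      rcases hp with ⟨hpsq, hpn⟩
      simp only [hSdef, hS'def, Set.mem_union, Set.mem_setOf_eq] at hpn
      by_contra hne
      rcases lt_or_gt_of_ne hne with h | h
      · exact hpn (Or.inr ⟨hpsq.1, hpsq.2, h⟩)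
      · exact hpn (Or.inl ⟨hpsq.1, hpsq.2, h⟩)
  have hunion : ∫ p in S ∪ S', f p ∂(volume.prod volume)
      = ∫ p in Set.Ioc (0:ℝ) 1 ×ˢ Set.Ioc (0:ℝ) 1, f p ∂(volume.prod volume) :=
    setIntegral_congr_set hunion_ae
  have hdisj : Disjoint S S' := by
    rw [Set.disjoint_left]
    intro p hp hp'
    exact absurd (hp.2.2.trans hp'.2.2) (lt_irrefl _)
  have hsplit : ∫ p in S ∪ S', f p ∂(volume.prod volume)
      = (∫ p in S, f p ∂(volume.prod volume)) + ∫ p in S', f p ∂(volume.prod volume) :=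
    setIntegral_union hdisj hS'm hD2 hS'int
  -- the full square integral
  have hsq : ∫ p in Set.Ioc (0:ℝ) 1 ×ˢ Set.Ioc (0:ℝ) 1, f p ∂(volume.prod volume)
      = lam * gam - 2 + gam * lam := by
    have heq : ∫ p in Set.Ioc (0:ℝ) 1 ×ˢ Set.Ioc (0:ℝ) 1, f p ∂(volume.prod volume)
        = ∫ p in Set.Ioc (0:ℝ) 1 ×ˢ Set.Ioc (0:ℝ) 1,
            ((p.1 * g p.1) * (g p.2 / p.2) - 2 * (g p.1 * g p.2)
              + (g p.1 / p.1) * (p.2 * g p.2)) ∂(volume.prod volume) := by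
      refine setIntegral_congr_fun (measurableSet_Ioc.prod measurableSet_Ioc) (fun p hp => ?_)
      have h1 : p.1 ≠ 0 := ne_of_gt hp.1.1
      have h2 : p.2 ≠ 0 := ne_of_gt hp.2.1
      simp only [hfdef]
      field_simp
      ring
    rw [heq, ← Measure.prod_restrict]
    have I1 : Integrable (fun p : ℝ × ℝ => (p.1 * g p.1) * (g p.2 / p.2))
        ((volume.restrict (Set.Ioc (0:ℝ) 1)).prod (volume.restrict (Set.Ioc (0:ℝ) 1))) :=
      hIk.mul_prod hgamInt
    have I2 : Integrable (fun p : ℝ × ℝ => g p.1 * g p.2)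
        ((volume.restrict (Set.Ioc (0:ℝ) 1)).prod (volume.restrict (Set.Ioc (0:ℝ) 1))) :=
      hgint.mul_prod hgint
    have I3 : Integrable (fun p : ℝ × ℝ => (g p.1 / p.1) * (p.2 * g p.2))
        ((volume.restrict (Set.Ioc (0:ℝ) 1)).prod (volume.restrict (Set.Ioc (0:ℝ) 1))) :=
      hgamInt.mul_prod hIk
    have Isub : Integrable
        (fun p : ℝ × ℝ => (p.1 * g p.1) * (g p.2 / p.2) - 2 * (g p.1 * g p.2))
        ((volume.restrict (Set.Ioc (0:ℝ) 1)).prod (volume.restrict (Set.Ioc (0:ℝ) 1))) :=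
      I1.sub (I2.const_mul 2)
    have e1 := integral_add (μ := (volume.restrict (Set.Ioc (0:ℝ) 1)).prod
      (volume.restrict (Set.Ioc (0:ℝ) 1))) Isub I3
    have e2 := integral_sub (μ := (volume.restrict (Set.Ioc (0:ℝ) 1)).prod
      (volume.restrict (Set.Ioc (0:ℝ) 1))) I1 (I2.const_mul 2)
    have e3 : ∫ (p : ℝ × ℝ), p.1 * g p.1 * (g p.2 / p.2)
        ∂(volume.restrict (Set.Ioc (0:ℝ) 1)).prod (volume.restrict (Set.Ioc (0:ℝ) 1))
        = lam * gam := by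
      have h := integral_prod_mul (μ := volume.restrict (Set.Ioc (0:ℝ) 1))
        (ν := volume.restrict (Set.Ioc (0:ℝ) 1))
        (f := fun v => v * g v) (g := fun v => g v / v)
      simpa [hlam, hgam] using h
    have e4 : ∫ (p : ℝ × ℝ), g p.1 / p.1 * (p.2 * g p.2)
        ∂(volume.restrict (Set.Ioc (0:ℝ) 1)).prod (volume.restrict (Set.Ioc (0:ℝ) 1))
        = gam * lam := by
      have h := integral_prod_mul (μ := volume.restrict (Set.Ioc (0:ℝ) 1))
        (ν := volume.restrict (Set.Ioc (0:ℝ) 1))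
        (f := fun v => g v / v) (g := fun v => v * g v)
      simpa [hlam, hgam] using h
    rw [e1, e2, integral_const_mul, integral_prod_mul, e3, e4, hg1]
    ring
  -- value of the double integral
  have hdouble : ∫ p in S, f p ∂(volume.prod volume) = gam * lam - 1 := by
    have h2 : (∫ p in S, f p ∂(volume.prod volume)) + ∫ p in S, f p ∂(volume.prod volume)
        = lam * gam - 2 + gam * lam := by
      rw [← hswapint] at *
      rw [← hsplit, hunion, hsq]
    linarith
  rw [show (∫ p in {p : ℝ × ℝ | p.1 ∈ Set.Ioc (0:ℝ) 1 ∧ p.2 ∈ Set.Ioc (0:ℝ) 1 ∧ p.2 < p.1},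
      (p.1 - p.2)^2 * (g p.1 / p.1) * (g p.2 / p.2) ∂(volume.prod volume))
      = gam * lam - 1 from hdouble, hsingle, ha', hc', hb, hc]
  field_simp
  ring
end

section
/- For E(ρ) = F(ρ)(1 - αρ) with F(ρ) = ρ(1-ρ), the Chapman–Enskog stability expression D(ρ) = -(F')² + E' + (1/(1-ρ))(E - (F'-E')F - F'E) equals 2ρ(1-ρ) - α ρ(2+ρ)(1-ρ); hence D(ρ) ≥ 0 for all ρ ∈ [0,1] if and only if α ≤ 2/3. -/
/-- For `F(ρ) = ρ(1-ρ)` and `E(ρ) = F(ρ)(1-αρ)`, the Chapman–Enskog stability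
expression `D(ρ) = -(F')² + E' + (1/(1-ρ))(E - (F'-E')F - F'E)` equals
`2ρ(1-ρ) - αρ(2+ρ)(1-ρ)`; hence `D(ρ) ≥ 0` for all `ρ ∈ [0,1]` if and only if `α ≤ 2/3`. -/
theorem stmt18 (α : ℝ) (F E : ℝ → ℝ)
    (hF : ∀ ρ, F ρ = ρ * (1 - ρ)) (hE : ∀ ρ, E ρ = ρ * (1 - ρ) * (1 - α * ρ)) :
    (∀ ρ ∈ Set.Ico (0:ℝ) 1,
      -(deriv F ρ)^2 + deriv E ρ +
          (1/(1-ρ)) * (E ρ - (deriv F ρ - deriv E ρ) * F ρ - deriv F ρ * E ρ)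
        = 2*ρ*(1-ρ) - α*ρ*(2+ρ)*(1-ρ)) ∧
    ((∀ ρ ∈ Set.Icc (0:ℝ) 1, 0 ≤ 2*ρ*(1-ρ) - α*ρ*(2+ρ)*(1-ρ)) ↔ α ≤ 2/3) := by
  have hFe : F = fun ρ => ρ * (1 - ρ) := funext hF
  have hEe : E = fun ρ => ρ * (1 - ρ) * (1 - α * ρ) := funext hE
  subst hFe hEe
  have dF : ∀ ρ : ℝ, deriv (fun ρ : ℝ => ρ * (1 - ρ)) ρ = 1 - 2 * ρ := by
    intro ρ
    have h : HasDerivAt (fun x : ℝ => x * (1 - x)) (1 * (1 - ρ) + ρ * (0 - 1)) ρ :=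
      (hasDerivAt_id ρ).mul ((hasDerivAt_const ρ 1).sub (hasDerivAt_id ρ))
    rw [h.deriv]; ring
  have dE : ∀ ρ : ℝ, deriv (fun ρ : ℝ => ρ * (1 - ρ) * (1 - α * ρ)) ρ
      = 1 - 2 * ρ - 2 * α * ρ + 3 * α * ρ ^ 2 := by
    intro ρ
    have h : HasDerivAt (fun x : ℝ => x * (1 - x) * (1 - α * x))
        ((1 * (1 - ρ) + ρ * (0 - 1)) * (1 - α * ρ) + ρ * (1 - ρ) * (0 - (0 * ρ + α * 1))) ρ :=
      (((hasDerivAt_id ρ).mul ((hasDerivAt_const ρ 1).sub (hasDerivAt_id ρ))).mul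
        ((hasDerivAt_const ρ 1).sub ((hasDerivAt_const ρ α).mul (hasDerivAt_id ρ))))
    rw [h.deriv]; ring
  constructor
  · intro ρ hρ
    have h1 : (1 : ℝ) - ρ ≠ 0 := by
      have := hρ.2; intro h; nlinarith [hρ.1]
    rw [dF, dE]
    field_simp
    ring
  · constructor
    · intro h
      by_contra hc
      push_neg at hc
      set ρ := (max (2 / α - 2) 0 + 1) / 2 with hρdef
      have hα : 0 < α := lt_trans (by norm_num) hc
      have hlt : 2 / α - 2 < 1 := by
        have h3 : 2 / α < 3 := by rw [div_lt_iff₀ hα]; linarith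
        linarith
      have hm : max (2 / α - 2) 0 < 1 := by
        apply max_lt hlt (by norm_num)
      have hρ0 : 0 < ρ := by
        have := le_max_right (2 / α - 2) 0
        rw [hρdef]; linarith
      have hρ1 : ρ < 1 := by rw [hρdef]; linarith
      have hmem : ρ ∈ Set.Icc (0:ℝ) 1 := ⟨le_of_lt hρ0, le_of_lt hρ1⟩
      have hD := h ρ hmem
      have hge : 2 / α - 2 ≤ max (2 / α - 2) 0 := le_max_left _ _
      have hρgt : 2 / α - 2 < ρ := by rw [hρdef]; linarith
      have : 2 / α < 2 + ρ := by linarith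
      have h2 : 2 < α * (2 + ρ) := by
        rw [div_lt_iff₀ hα] at this; linarith [mul_comm α (2 + ρ)]
      have hp : 0 < (α * (2 + ρ) - 2) * (ρ * (1 - ρ)) :=
        mul_pos (by linarith) (mul_pos hρ0 (sub_pos.mpr hρ1))
      nlinarith [hD, hp]
    · intro hα ρ hρ
      have h1 := hρ.1
      have h2 := hρ.2
      have hin : 0 ≤ 2 - α * (2 + ρ) := by
        nlinarith [mul_nonneg (by linarith : (0:ℝ) ≤ 2/3 - α) (by linarith : (0:ℝ) ≤ 2 + ρ)]
      nlinarith [mul_nonneg (mul_nonneg h1 (sub_nonneg.mpr h2)) hin]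
end

section
/- For the two-velocity model (N = 1, v_0 = 0, v_1 = 1), the eigenvalues are λ_0 = -f_1/(1-ρ) ≤ 0 and λ_1 = 1, with ρ = f_0 + f_1; the conservative variables N_0 = 1-ρ, N_1 = (1-ρ)/(1-f_0) satisfy f_1 = N_0(1/N_1 - 1), f_0 = N_0(1/N_0 - 1/N_1), and λ_0 = 1 - 1/N_1; moreover the subcharacteristic condition -F(ρ)/(1-ρ) ≤ F'(ρ) ≤ 1 holds for all ρ ∈ [0,1) whenever F is a concave differentiable function with F(0) = F(1) = 0 and F ≥ 0. -/
/-- For the two-velocity model (`N = 1`, `v_0 = 0`, `v_1 = 1`):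
`λ_0 = -f_1/(1-ρ) ≤ 0` (and `λ_1 = 1`); the conservative variables `N_0 = 1-ρ`,
`N_1 = (1-ρ)/(1-f_0)` satisfy `f_1 = N_0(1/N_1 - 1)`, `f_0 = N_0(1/N_0 - 1/N_1)` and
`λ_0 = 1 - 1/N_1`; moreover the subcharacteristic condition
`-F(ρ)/(1-ρ) ≤ F'(ρ) ≤ 1` holds on `[0,1)` for concave differentiable `F ≥ 0` with
`F(0) = F(1) = 0` (and `F' ≤ 1`). -/
theorem stmt19 (f0 f1 : ℝ) (hf0 : 0 ≤ f0) (hf1 : 0 ≤ f1) (hρ : f0 + f1 < 1)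
    (F : ℝ → ℝ) (hFc : ConcaveOn ℝ (Set.Icc 0 1) F)
    (hFd : DifferentiableOn ℝ F (Set.Icc 0 1))
    (hF0 : F 0 = 0) (hF1 : F 1 = 0) (hFpos : ∀ x ∈ Set.Icc (0:ℝ) 1, 0 ≤ F x)
    (hF' : ∀ r ∈ Set.Ico (0:ℝ) 1, deriv F r ≤ 1)
    (ρ N0 N1 lam0 lam1 : ℝ)
    (hρdef : ρ = f0 + f1) (hN0 : N0 = 1 - ρ) (hN1 : N1 = (1 - ρ) / (1 - f0))
    (hlam0 : lam0 = -f1 / (1 - ρ)) (hlam1 : lam1 = 1) :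
    lam0 ≤ 0 ∧
    f1 = N0 * (1 / N1 - 1) ∧
    f0 = N0 * (1 / N0 - 1 / N1) ∧
    lam0 = 1 - 1 / N1 ∧
    (∀ r ∈ Set.Ico (0:ℝ) 1, -F r / (1 - r) ≤ deriv F r ∧ deriv F r ≤ 1) := by
  have hρ1 : ρ < 1 := by rw [hρdef]; exact hρ
  have h1ρ : (0:ℝ) < 1 - ρ := by linarith
  have hf01 : f0 < 1 := by linarith
  have h1f0 : (0:ℝ) < 1 - f0 := by linarith
  refine ⟨?_, ?_, ?_, ?_, ?_⟩
  · rw [hlam0]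
    apply div_nonpos_of_nonpos_of_nonneg <;> linarith
  · rw [hN0, hN1]
    field_simp
    nlinarith [hρdef]
  · rw [hN0, hN1]
    field_simp
    try nlinarith [hρdef]
  · rw [hlam0, hN1]
    field_simp
    nlinarith [hρdef]
  · intro r hr
    refine ⟨?_, hF' r hr⟩
    obtain ⟨hr0, hr1⟩ := hr
    have h1r : (0:ℝ) < 1 - r := by linarith
    by_cases hd : DifferentiableAt ℝ F r
    · have hconv : ConvexOn ℝ (Set.Icc 0 1) (fun x => -F x) := hFc.neg
      have hrm : r ∈ Set.Icc (0:ℝ) 1 := ⟨hr0, hr1.le⟩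
      have h1m : (1:ℝ) ∈ Set.Icc (0:ℝ) 1 := ⟨zero_le_one, le_refl 1⟩
      have hderiv : HasDerivAt (fun x => -F x) (-deriv F r) r := hd.hasDerivAt.neg
      have hle := hconv.le_slope_of_hasDerivAt hrm h1m hr1 hderiv
      rw [slope_def_field] at hle
      have hs : ((fun x => -F x) 1 - (fun x => -F x) r) / (1 - r) = F r / (1 - r) := by
        simp [hF1]
      rw [hs] at hle
      rw [neg_div]
      linarith
    · rw [deriv_zero_of_not_differentiableAt hd]
      have := hFpos r ⟨hr0, hr1.le⟩
      have : -F r / (1 - r) ≤ 0 := div_nonpos_of_nonpos_of_nonneg (by linarith) h1r.le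
      linarith
end
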